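/- arXiv:math/0602553 — 5 statements merged into one kernel-verified Lean document; each statement's English description precedes it below -/
import Mathlib

section
/- Let Γ be a finite connected loopless multigraph with γ vertices, and let M be its Laplacian-type intersection matrix, i.e. M has entries k_{ij} = (number of edges between v_i and v_j) for i ≠ j and k_{ii} = −(degree of v_i). Then for any s, t ∈ {1,…,γ}, the number of spanning trees of Γ equals (−1)^{s+t+γ−1} det(M with the t-th column and s-th row deleted). -/
/-- A multigraph: a set of edges, each with an unordered pair of endpoints. -/
structure Multigraph (V E : Type) where
  ends : E → Sym2 V

namespace Multigraph

variable {V E : Type}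

/-- Adjacency via an edge lying in the subset `S`. -/
def Adj (G : Multigraph V E) (S : Set E) (x y : V) : Prop :=
  x ≠ y ∧ ∃ e ∈ S, G.ends e = s(x, y)

/-- The subgraph with edge set `S` is connected (and spans `V`). -/
def ConnectedOn (G : Multigraph V E) (S : Set E) : Prop :=
  ∀ x y : V, Relation.ReflTransGen (G.Adj S) x y

def Connected (G : Multigraph V E) : Prop := G.ConnectedOn Set.univ

/-- No edge is a loop. -/
def Loopless (G : Multigraph V E) : Prop := ∀ e : E, ¬ (G.ends e).IsDiag

/-- A spanning tree: a minimally connecting spanning set of edges. -/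
def IsSpanningTree (G : Multigraph V E) (S : Finset E) : Prop :=
  G.ConnectedOn (S : Set E) ∧ ∀ e ∈ S, ¬ G.ConnectedOn ((S : Set E) \ {e})

/-- The complexity: the number of spanning trees. -/
noncomputable def complexity (G : Multigraph V E) : ℕ :=
  {S : Finset E | G.IsSpanningTree S}.ncard

/-- Number of edges joining `x` and `y`. -/
noncomputable def edgeCount (G : Multigraph V E) (x y : V) : ℕ :=
  {e : E | G.ends e = s(x, y)}.ncard

/-- The Laplacian-type intersection matrix. -/
noncomputable def lap (G : Multigraph V E) [Fintype V] [DecidableEq V] (i j : V) : ℤ :=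
  if i = j then -(∑ u ∈ Finset.univ.erase i, (G.edgeCount i u : ℤ))
  else (G.edgeCount i j : ℤ)

/-- The lattice of multidegrees of twisters: span of the columns of the Laplacian. -/
noncomputable def lapLattice (G : Multigraph V E) [Fintype V] [DecidableEq V] :
    AddSubgroup (V → ℤ) :=
  AddSubgroup.closure (Set.range fun j => fun i => G.lap i j)

/-- The subgroup of `ℤ^V` of vectors with zero coordinate sum. -/
def zeroSum (V : Type) [Fintype V] : AddSubgroup (V → ℤ) where
  carrier := {z | ∑ v, z v = 0}
  add_mem' := by
    intro a b ha hb
    simp only [Set.mem_setOf_eq] at *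
    simp [Finset.sum_add_distrib, ha, hb]
  zero_mem' := by simp
  neg_mem' := by
    intro a ha
    simp only [Set.mem_setOf_eq] at *
    simp [ha]

/-- The degree class group of a multigraph. -/
noncomputable def DCG (G : Multigraph V E) [Fintype V] [DecidableEq V] : Type :=
  zeroSum V ⧸ (G.lapLattice.addSubgroupOf (zeroSum V))

noncomputable instance (G : Multigraph V E) [Fintype V] [DecidableEq V] :
    AddCommGroup (G.DCG) :=
  QuotientAddGroup.Quotient.addCommGroup _

/-- The class in the DCG of an element of the zero-sum lattice. -/
noncomputable def DCGclass (G : Multigraph V E) [Fintype V] [DecidableEq V]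
    (z : zeroSum V) : G.DCG :=
  QuotientAddGroup.mk z

/-- The element `e_x - e_y` of the zero-sum lattice. -/
def eDiff (V : Type) [Fintype V] [DecidableEq V] (x y : V) : zeroSum V :=
  ⟨fun v => (if v = x then 1 else 0) - (if v = y then 1 else 0), by
    show ∑ v : V, ((if v = x then (1:ℤ) else 0) - (if v = y then 1 else 0)) = 0
    simp [Finset.sum_sub_distrib]⟩

end Multigraph

/-!
Orient every edge and let `N` be the signed vertex-edge incidence matrix, so that `M = -N Nᵀ`.
By the Cauchy–Binet formula, `det M^s_t` is `(-1)^n` times the sum, over the `n`-element edge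
sets `S`, of the products of the minors of `N` with rows `s`, resp. `t`, deleted and columns
`S`. The columns of `N` sum to zero, so deleting row `u` instead of row `0` only multiplies such
a minor by `(-1)^u`. With row `0` deleted, the minor is a unit when `S` connects the graph (its
columns then generate `ℤ^n`) and vanishes otherwise (the indicator of a component avoiding `0`
is in its left kernel). Since an `n`-element edge set is a spanning tree exactly when it is
connecting, the sum counts the spanning trees, with sign `(-1)^(s+t)`.
-/

open Finset
open scoped Matrix

namespace Matrix

variable {R : Type*} [CommRing R] {ι E : Type*} [Fintype ι] [DecidableEq ι]

theorem det_mul_eq_sum_prod_mul_det_submatrix [Fintype E] (A : Matrix ι E R)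
    (B : Matrix E ι R) :
    (A * B).det = ∑ f : ι → E, (∏ i, A i (f i)) * (B.submatrix f id).det := by
  have hrows : A * B = of fun i => ∑ e, A i e • B e := by
    ext i j
    simp [mul_apply, Finset.sum_apply]
  have hexpand := (detRowAlternating (n := ι) (R := R)).toMultilinearMap.map_sum
    fun i (e : E) => A i e • B e
  have hsmul (f : ι → E) := (detRowAlternating (n := ι) (R := R)).toMultilinearMap.map_smul_univ
    (fun i => A i (f i)) (fun i => B (f i))
  simp only [AlternatingMap.coe_multilinearMap] at hexpand hsmul
  rw [hrows]
  exact hexpand.trans (Finset.sum_congr rfl fun f _ => hsmul f)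

theorem det_mul_eq_sum_embedding [Fintype E] [DecidableEq E] (A : Matrix ι E R)
    (B : Matrix E ι R) :
    (A * B).det = ∑ f : ι ↪ E, (∏ i, A i (f i)) * (B.submatrix f id).det := by
  rw [det_mul_eq_sum_prod_mul_det_submatrix]
  refine (Fintype.sum_of_injective _ DFunLike.coe_injective _ _ (fun f hf => ?_)
    fun _ => rfl).symm
  obtain ⟨i, j, hfij, hij⟩ :=
    Function.not_injective_iff.mp fun hinj => hf ⟨⟨f, hinj⟩, rfl⟩
  rw [det_zero_of_row_eq hij (by ext; simp [hfij]), mul_zero]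

theorem sum_perm_prod_mul_det_submatrix (A : Matrix ι E R) (B : Matrix E ι R) (f : ι ↪ E) :
    ∑ σ : Equiv.Perm ι, (∏ i, A i (f (σ i))) * (B.submatrix (f ∘ σ) id).det =
      (A.submatrix id f).det * (B.submatrix f id).det := by
  have hperm (σ : Equiv.Perm ι) :
      (B.submatrix (f ∘ σ) id).det = σ.sign * (B.submatrix f id).det :=
    det_permute σ (B.submatrix f id)
  simp_rw [hperm, ← mul_assoc, ← Finset.sum_mul, ← det_transpose (A.submatrix id f),
    det_apply]
  congr 1
  refine Finset.sum_congr rfl fun σ _ => ?_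
  simp [Units.smul_def, mul_comm]

end Matrix

namespace Set.powersetCard

theorem sum_fiber_ofFinEmb {E M : Type*} [Fintype E] [DecidableEq E] [AddCommMonoid M] {n : ℕ}
    {s : powersetCard E n} {f₀ : Fin n ↪ E} (hf₀ : ofFinEmb n E f₀ = s)
    (T : (Fin n ↪ E) → M) :
    ∑ f : {f // ofFinEmb n E f = s}, T f =
      ∑ σ : Equiv.Perm (Fin n), T (σ.toEmbedding.trans f₀) := by
  subst hf₀
  have hfiber {f g : Fin n ↪ E} :
      ofFinEmb n E f = ofFinEmb n E g ↔ Set.range f = Set.range g := by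
    rw [← SetLike.coe_set_eq, coe_ofFinEmb, coe_ofFinEmb]
  let e (σ : Equiv.Perm (Fin n)) : {f // ofFinEmb n E f = ofFinEmb n E f₀} :=
    ⟨σ.toEmbedding.trans f₀, hfiber.mpr (by
      rw [Function.Embedding.coe_trans]; simp [Set.range_comp])⟩
  refine (Fintype.sum_bijective e ⟨fun σ τ hστ => ?_, fun ⟨f, hf⟩ => ?_⟩ _ _
    fun _ => rfl).symm
  · ext i
    exact congrArg Fin.val (f₀.injective (DFunLike.congr_fun (congrArg Subtype.val hστ) i))
  · have hmem (i : Fin n) : f i ∈ Set.range f₀ := hfiber.mp hf ▸ Set.mem_range_self i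
    let g (i : Fin n) : Fin n := (Equiv.ofInjective f₀ f₀.injective).symm ⟨f i, hmem i⟩
    have hg (i : Fin n) : f₀ (g i) = f i := Equiv.apply_ofInjective_symm f₀.injective _
    have hginj : Function.Injective g := fun i j hij => f.injective (by rw [← hg, ← hg, hij])
    refine ⟨Equiv.ofBijective g (Finite.injective_iff_bijective.mp hginj), ?_⟩
    ext i
    exact hg i

end Set.powersetCard

namespace Matrix

variable {R : Type*} [CommRing R]

open Set.powersetCard in
/-- The Cauchy–Binet formula. -/
theorem det_mul_eq_sum_powersetCard {E : Type*} [Fintype E] [DecidableEq E] {n : ℕ}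
    (enum : Set.powersetCard E n → (Fin n ↪ E)) (henum : ∀ s, ofFinEmb n E (enum s) = s)
    (A : Matrix (Fin n) E R) (B : Matrix E (Fin n) R) :
    (A * B).det = ∑ s, (A.submatrix id (enum s)).det * (B.submatrix (enum s) id).det := by
  rw [det_mul_eq_sum_embedding, ← Fintype.sum_fiberwise (ofFinEmb n E)]
  refine Finset.sum_congr rfl fun s _ => ?_
  exact (sum_fiber_ofFinEmb (henum s) fun f => (∏ i, A i (f i)) * (B.submatrix f id).det).trans
    (sum_perm_prod_mul_det_submatrix A B (enum s))

theorem det_eq_zero_of_column_sums_eq_zero {ι : Type*} [Fintype ι] [DecidableEq ι] [Nonempty ι]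
    {A : Matrix ι ι R} (h : ∀ j, ∑ i, A i j = 0) : A.det = 0 := by
  obtain ⟨j⟩ := ‹Nonempty ι›
  have hrows : ∑ i, (1 : R) • A i = 0 :=
    funext fun k => (Finset.sum_apply k _ _).trans (by simpa using h k)
  rw [← one_smul R A.det, ← det_updateRow_sum A j fun _ => 1, hrows]
  exact det_eq_zero_of_row_eq_zero j fun k => by simp

theorem det_submatrix_succAbove_of_column_sums_eq_zero {n : ℕ}
    {C : Matrix (Fin (n + 1)) (Fin n) R} (hC : ∀ j, ∑ i, C i j = 0) (u : Fin (n + 1)) :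
    (C.submatrix u.succAbove id).det = (-1) ^ (u : ℕ) * (C.submatrix Fin.succ id).det := by
  -- `det [y | C] = ∑ i, (-1)^i y_i det C_{-i}` vanishes at `y = e_u - e_0`.
  let D (y : Fin (n + 1) → R) : Matrix (Fin (n + 1)) (Fin (n + 1)) R :=
    of fun i => Fin.cons (y i) (C i)
  have hexpand (y : Fin (n + 1) → R) :
      (D y).det =
        ∑ i : Fin (n + 1), (-1) ^ (i : ℕ) * y i * (C.submatrix i.succAbove id).det := by
    rw [det_succ_column_zero]
    rfl
  have hzero : (D (Pi.single u 1 - Pi.single 0 1)).det = 0 := by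
    refine det_eq_zero_of_column_sums_eq_zero fun j => ?_
    cases j using Fin.cases with
    | zero => simp [D]
    | succ j => simpa [D] using hC j
  have hsign : ((-1 : R) ^ (u : ℕ)) ^ 2 = 1 := by
    rw [← pow_mul, mul_comm, pow_mul, neg_one_sq, one_pow]
  rw [hexpand] at hzero
  simp only [Pi.sub_apply, Pi.single_apply, mul_sub, sub_mul, Finset.sum_sub_distrib] at hzero
  simp only [mul_ite, ite_mul, mul_one, mul_zero, zero_mul, Finset.sum_ite_eq', Finset.mem_univ,
    if_true, Fin.val_zero, pow_zero, one_mul, Fin.succAbove_zero] at hzero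
  linear_combination (-1) ^ (u : ℕ) * hzero - (C.submatrix u.succAbove id).det * hsign

end Matrix

namespace Multigraph

section Orientation

variable {V E : Type} (G : Multigraph V E)

instance (S : Set E) : Std.Symm (G.Adj S) :=
  ⟨fun _ _ ⟨hne, e, he, hends⟩ => ⟨hne.symm, e, he, hends.trans Sym2.eq_swap⟩⟩

noncomputable def fst (e : E) : V := (G.ends e).out.1

noncomputable def snd (e : E) : V := (G.ends e).out.2

theorem ends_eq (e : E) : G.ends e = s(G.fst e, G.snd e) :=
  (Quot.out_eq (G.ends e)).symm

theorem adj_fst_snd {S : Set E} {e : E} (he : e ∈ S) (hne : G.fst e ≠ G.snd e) :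
    G.Adj S (G.fst e) (G.snd e) :=
  ⟨hne, e, he, G.ends_eq e⟩

theorem connectedOn_diff_singleton {S : Set E} {e : E} (hS : G.ConnectedOn S)
    (he : Relation.ReflTransGen (G.Adj (S \ {e})) (G.fst e) (G.snd e)) :
    G.ConnectedOn (S \ {e}) := by
  have hstep {x y : V} (hxy : G.Adj S x y) : Relation.ReflTransGen (G.Adj (S \ {e})) x y := by
    obtain ⟨hne, f, hf, hends⟩ := hxy
    by_cases hfe : f = e
    · subst hfe
      rcases Sym2.eq_iff.mp ((G.ends_eq f).symm.trans hends) with ⟨rfl, rfl⟩ | ⟨rfl, rfl⟩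
      exacts [he, Std.Symm.symm _ _ he]
    · exact .single ⟨hne, f, ⟨hf, hfe⟩, hends⟩
  intro x y
  induction hS x y with
  | refl => exact .refl
  | tail _ hadj ih => exact ih.trans (hstep hadj)

theorem fst_mem_iff_snd_mem_of_closed {S : Set E} {W : Set V}
    (hW : ∀ v ∈ W, ∀ u, G.Adj S v u → u ∈ W) {e : E} (he : e ∈ S) :
    G.fst e ∈ W ↔ G.snd e ∈ W := by
  by_cases hne : G.fst e = G.snd e
  · rw [hne]
  · exact ⟨fun h => hW _ h _ (G.adj_fst_snd he hne),
      fun h => hW _ h _ (Std.Symm.symm _ _ (G.adj_fst_snd he hne))⟩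

theorem exists_separating_of_not_reflTransGen {S : Set E} {x y : V}
    (hxy : ¬ Relation.ReflTransGen (G.Adj S) x y) (z : V) :
    ∃ W : Set V, z ∉ W ∧ (x ∈ W ↔ y ∉ W) ∧
      ∀ e ∈ S, (G.fst e ∈ W ↔ G.snd e ∈ W) := by
  let comp (v : V) : Set V := {u | Relation.ReflTransGen (G.Adj S) v u}
  have hclosed (v : V) : ∀ e ∈ S, (G.fst e ∈ comp v ↔ G.snd e ∈ comp v) :=
    fun _ he => G.fst_mem_iff_snd_mem_of_closed (fun _ hu _ hadj => hu.tail hadj) he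
  by_cases hz : Relation.ReflTransGen (G.Adj S) x z
  · refine ⟨comp y, fun hyz => hxy (hz.trans (Std.Symm.symm _ _ hyz)), ?_, hclosed y⟩
    exact ⟨fun hx => absurd (Std.Symm.symm _ _ hx) hxy, fun h => absurd .refl h⟩
  · exact ⟨comp x, hz, ⟨fun _ => hxy, fun _ => .refl⟩, hclosed x⟩

end Orientation

section IncidenceMatrix

variable {V E : Type} [DecidableEq V] (G : Multigraph V E)

noncomputable def incMatrix (R : Type*) [Ring R] : Matrix V E R :=
  Matrix.of fun v e => (Pi.single (G.fst e) 1 - Pi.single (G.snd e) 1 : V → R) v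

theorem edgeCount_eq_sum {R : Type*} [AddCommMonoidWithOne R] [Fintype E] (x y : V) :
    (G.edgeCount x y : R) = ∑ e, if G.ends e = s(x, y) then 1 else 0 := by
  rw [edgeCount, Set.ncard_eq_toFinset_card', Set.toFinset_ofPred, Finset.sum_boole]

variable {R : Type*} [CommRing R]

theorem sum_incMatrix_apply [Fintype V] (e : E) : ∑ v, G.incMatrix R v e = 0 := by
  simp [incMatrix, Finset.sum_sub_distrib]

theorem incMatrix_mul_incMatrix_of_ne {v w : V} (hvw : v ≠ w) (e : E) :
    G.incMatrix R v e * G.incMatrix R w e = -if G.ends e = s(v, w) then 1 else 0 := by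
  simp only [ends_eq, incMatrix, Matrix.of_apply, Pi.sub_apply, Pi.single_apply, Sym2.eq_iff]
  split_ifs <;> grind

theorem incMatrix_mul_self [Fintype V] (v : V) (e : E) :
    G.incMatrix R v e * G.incMatrix R v e =
      ∑ u ∈ univ.erase v, if G.ends e = s(v, u) then 1 else 0 := by
  simp only [ends_eq, incMatrix, Matrix.of_apply, Pi.sub_apply, Pi.single_apply, Sym2.eq_iff]
  generalize G.fst e = a, G.snd e = b
  by_cases ha : v = a <;> by_cases hb : v = b <;> subst_vars <;>
    simp_all [Finset.sum_ite_eq, eq_comm]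

theorem lap_eq_neg_incMatrix_mul_transpose [Fintype V] [Fintype E] :
    Matrix.of G.lap = -(G.incMatrix ℤ * (G.incMatrix ℤ)ᵀ) := by
  ext v w
  simp only [Matrix.of_apply, Matrix.neg_apply, Matrix.mul_apply, Matrix.transpose_apply, lap]
  split_ifs with hvw
  · subst hvw
    simp_rw [incMatrix_mul_self, edgeCount_eq_sum]
    rw [Finset.sum_comm]
  · simp_rw [G.incMatrix_mul_incMatrix_of_ne hvw, Finset.sum_neg_distrib, edgeCount_eq_sum,
      neg_neg]

end IncidenceMatrix

section Rooted

variable {n : ℕ} {E : Type} (G : Multigraph (Fin (n + 1)) E)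

noncomputable def reducedIncMatrix (R : Type*) [Ring R] : Matrix (Fin n) E R :=
  (G.incMatrix R).submatrix Fin.succ id

variable {R : Type*} [CommRing R]

theorem vecMul_reducedIncMatrix {W : Set (Fin (n + 1))} [DecidablePred (· ∈ W)] (hW : 0 ∉ W)
    (e : E) :
    ((fun i => if i.succ ∈ W then 1 else 0) ᵥ* G.reducedIncMatrix R) e =
      (if G.fst e ∈ W then 1 else 0) - if G.snd e ∈ W then 1 else 0 := by
  have hsingle (a : Fin (n + 1)) :
      ∑ i : Fin n,
          (if i.succ ∈ W then (1 : R) else 0) * (Pi.single a 1 : Fin (n + 1) → R) i.succ =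
        if a ∈ W then 1 else 0 := by
    have hsum := Fin.sum_univ_succ fun v =>
      (if v ∈ W then (1 : R) else 0) * (Pi.single a 1 : Fin (n + 1) → R) v
    simp only [hW, if_false, zero_mul, zero_add] at hsum
    rw [← hsum]
    simp [Pi.single_apply]
  simp only [Matrix.vecMul, dotProduct, reducedIncMatrix, incMatrix, Matrix.submatrix_apply,
    Matrix.of_apply, id, Pi.sub_apply, mul_sub, Finset.sum_sub_distrib, hsingle]

theorem span_reducedIncMatrix_col_eq_top {S : Set E} (hS : G.ConnectedOn S) :
    Submodule.span R ((G.reducedIncMatrix R).col '' S) = ⊤ := by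
  set M := Submodule.span R ((G.reducedIncMatrix R).col '' S)
  let φ (v : Fin (n + 1)) : Fin n → R := fun i => (Pi.single v 1 : Fin (n + 1) → R) i.succ
  have hcol (e : E) : (G.reducedIncMatrix R).col e = φ (G.fst e) - φ (G.snd e) := rfl
  have hadj {x y : Fin (n + 1)} (hxy : G.Adj S x y) : φ x - φ y ∈ M := by
    obtain ⟨-, e, he, hends⟩ := hxy
    have hmem : φ (G.fst e) - φ (G.snd e) ∈ M :=
      hcol e ▸ Submodule.subset_span ⟨e, he, rfl⟩
    rcases Sym2.eq_iff.mp ((G.ends_eq e).symm.trans hends) with ⟨rfl, rfl⟩ | ⟨rfl, rfl⟩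
    · exact hmem
    · simpa using M.neg_mem hmem
  have hφ (v : Fin (n + 1)) : φ v ∈ M := by
    induction hS 0 v with
    | refl => convert M.zero_mem; ext; simp [φ, Pi.single_apply, Fin.succ_ne_zero]
    | tail _ hxy ih => simpa using M.sub_mem ih (hadj hxy)
  rw [eq_top_iff, ← (Pi.basisFun R (Fin n)).span_eq, Submodule.span_le]
  rintro _ ⟨i, rfl⟩
  have hbasis : Pi.basisFun R (Fin n) i = φ i.succ := by
    ext j
    simp [φ, Pi.single_apply, eq_comm]
  exact hbasis ▸ hφ i.succ

theorem isUnit_det_submatrix_reducedIncMatrix {f : Fin n → E}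
    (hf : G.ConnectedOn (Set.range f)) : IsUnit ((G.reducedIncMatrix R).submatrix id f).det := by
  have hcols : Set.range ((G.reducedIncMatrix R).submatrix id f).col =
      (G.reducedIncMatrix R).col '' Set.range f := by
    rw [← Set.range_comp]
    rfl
  rw [← Matrix.isUnit_iff_isUnit_det, ← Matrix.mulVec_surjective_iff_isUnit,
    ← Matrix.coe_mulVecLin, ← LinearMap.range_eq_top, Matrix.range_mulVecLin, hcols]
  exact G.span_reducedIncMatrix_col_eq_top hf

theorem det_submatrix_reducedIncMatrix_eq_zero [IsDomain R] {f : Fin n → E}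
    (hf : ¬ G.ConnectedOn (Set.range f)) : ((G.reducedIncMatrix R).submatrix id f).det = 0 := by
  classical
  obtain ⟨x, y, hxy⟩ : ∃ x y, ¬ Relation.ReflTransGen (G.Adj (Set.range f)) x y := by
    simpa [ConnectedOn] using hf
  obtain ⟨W, hW0, hxyW, hW⟩ := G.exists_separating_of_not_reflTransGen hxy 0
  rw [← Matrix.exists_vecMul_eq_zero_iff]
  refine ⟨fun i => if i.succ ∈ W then 1 else 0, ?_, funext fun j => ?_⟩
  · obtain ⟨w, hw⟩ : ∃ w, w ∈ W := by
      by_cases hx : x ∈ W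
      exacts [⟨x, hx⟩, ⟨y, not_not.mp (mt hxyW.mpr hx)⟩]
    obtain ⟨i, rfl⟩ := Fin.exists_succ_eq.mpr (ne_of_mem_of_not_mem hw hW0)
    exact fun h => by simpa [hw] using congrFun h i
  · change ((fun i => if i.succ ∈ W then 1 else 0) ᵥ* G.reducedIncMatrix R) (f j) = 0
    rw [G.vecMul_reducedIncMatrix hW0]
    simp only [hW (f j) ⟨j, rfl⟩, sub_self]

theorem reducedIncMatrix_col_notMem_span [Nontrivial R] {T : Set E} {e : E}
    (he : ¬ Relation.ReflTransGen (G.Adj T) (G.fst e) (G.snd e)) :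
    (G.reducedIncMatrix R).col e ∉ Submodule.span R ((G.reducedIncMatrix R).col '' T) := by
  classical
  obtain ⟨W, hW0, hsep, hW⟩ := G.exists_separating_of_not_reflTransGen he 0
  let ψ := dotProductBilin R R fun i : Fin n => if i.succ ∈ W then (1 : R) else 0
  have hψ (f : E) : ψ ((G.reducedIncMatrix R).col f) =
      (if G.fst f ∈ W then 1 else 0) - if G.snd f ∈ W then 1 else 0 :=
    G.vecMul_reducedIncMatrix hW0 f
  have hker : Submodule.span R ((G.reducedIncMatrix R).col '' T) ≤ LinearMap.ker ψ := by
    rw [Submodule.span_le]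
    rintro _ ⟨f, hf, rfl⟩
    simp only [SetLike.mem_coe, LinearMap.mem_ker, hψ, hW f hf, sub_self]
  intro hmem
  have hzero := hker hmem
  rw [LinearMap.mem_ker, hψ] at hzero
  by_cases h : G.fst e ∈ W <;> simp_all

theorem linearIndependent_reducedIncMatrix_col {K : Type*} [Field K] {S : Finset E}
    (hS : G.IsSpanningTree S) :
    LinearIndependent K fun e : S => (G.reducedIncMatrix K).col e := by
  rw [linearIndependent_iff_notMem_span]
  intro e
  have himage : (fun e : S => (G.reducedIncMatrix K).col e) '' (Set.univ \ {e}) =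
      (G.reducedIncMatrix K).col '' ((S : Set E) \ {(e : E)}) := by
    rw [← Set.image_image, Set.image_sdiff Subtype.val_injective, Set.image_univ,
      Subtype.range_coe, Set.image_singleton]
  rw [himage]
  exact G.reducedIncMatrix_col_notMem_span fun hjoin =>
    hS.2 e e.2 (G.connectedOn_diff_singleton hS.1 hjoin)

theorem le_card_of_connectedOn {S : Finset E} (hS : G.ConnectedOn S) : n ≤ S.card := by
  classical
  calc n = Module.finrank ℚ (Fin n → ℚ) := by simp
    _ = ((S.image (G.reducedIncMatrix ℚ).col : Finset _) : Set (Fin n → ℚ)).finrank ℚ := by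
      rw [Set.finrank, coe_image, G.span_reducedIncMatrix_col_eq_top hS, finrank_top]
    _ ≤ (S.image (G.reducedIncMatrix ℚ).col).card := finrank_span_finset_le_card _
    _ ≤ S.card := card_image_le

theorem isSpanningTree_iff {S : Finset E} :
    G.IsSpanningTree S ↔ S.card = n ∧ G.ConnectedOn S := by
  classical
  refine ⟨fun hS => ⟨le_antisymm ?_ (G.le_card_of_connectedOn hS.1), hS.1⟩,
    fun ⟨hcard, hS⟩ => ⟨hS, fun e he hconn => ?_⟩⟩
  · simpa using (G.linearIndependent_reducedIncMatrix_col (K := ℚ) hS).fintype_card_le_finrank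
  · have hle := G.le_card_of_connectedOn (S := S.erase e) (by rwa [coe_erase])
    have hpos := card_pos.mpr ⟨e, he⟩
    rw [card_erase_of_mem he] at hle
    omega

open Classical in
theorem det_submatrix_reducedIncMatrix_sq (f : Fin n ↪ E) :
    ((G.reducedIncMatrix ℤ).submatrix id f).det ^ 2 =
      if G.IsSpanningTree (univ.map f) then 1 else 0 := by
  rw [isSpanningTree_iff, card_map, card_univ, Fintype.card_fin, coe_map, coe_univ,
    Set.image_univ]
  split_ifs with hf
  · exact Int.isUnit_sq (G.isUnit_det_submatrix_reducedIncMatrix hf.2)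
  · rw [G.det_submatrix_reducedIncMatrix_eq_zero (by tauto), zero_pow two_ne_zero]

theorem det_incMatrix_submatrix_succAbove (u : Fin (n + 1)) (f : Fin n → E) :
    ((G.incMatrix R).submatrix u.succAbove f).det =
      (-1) ^ (u : ℕ) * ((G.reducedIncMatrix R).submatrix id f).det :=
  Matrix.det_submatrix_succAbove_of_column_sums_eq_zero
    (C := (G.incMatrix R).submatrix id f) (fun j => G.sum_incMatrix_apply (f j)) u

open Classical in
theorem det_incMatrix_submatrix_succAbove_mul (s t : Fin (n + 1)) (f : Fin n ↪ E) :
    ((G.incMatrix ℤ).submatrix s.succAbove f).det *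
        ((G.incMatrix ℤ).submatrix t.succAbove f).det =
      (-1) ^ ((s : ℕ) + (t : ℕ)) * if G.IsSpanningTree (univ.map f) then 1 else 0 := by
  rw [det_incMatrix_submatrix_succAbove, det_incMatrix_submatrix_succAbove,
    ← det_submatrix_reducedIncMatrix_sq, pow_add]
  ring

theorem lap_submatrix_succAbove [Fintype E] (s t : Fin (n + 1)) :
    Matrix.of (fun i j : Fin n => G.lap (s.succAbove i) (t.succAbove j)) =
      -((G.incMatrix ℤ).submatrix s.succAbove id *
        ((G.incMatrix ℤ).submatrix t.succAbove id)ᵀ) := by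
  ext i j
  simpa [Matrix.mul_apply] using
    congrFun₂ G.lap_eq_neg_incMatrix_mul_transpose (s.succAbove i) (t.succAbove j)

open Classical in
theorem complexity_eq_card_powersetCard [Fintype E] :
    G.complexity = #{S : Set.powersetCard E n | G.IsSpanningTree S.val} := by
  rw [complexity, Set.ncard_eq_toFinset_card', Set.toFinset_ofPred]
  refine (card_bij (fun S _ => S.val) (by simp) (fun _ _ _ _ => Subtype.ext) fun S hS => ?_).symm
  have hS : G.IsSpanningTree S := (mem_filter.mp hS).2
  exact ⟨⟨S, (G.isSpanningTree_iff.mp hS).1⟩, by simpa using hS, rfl⟩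

end Rooted

end Multigraph

open Multigraph in
theorem matrix_tree_theorem_general {n : ℕ} {E : Type} [Fintype E]
    (G : Multigraph (Fin (n + 1)) E) (s t : Fin (n + 1)) :
    (G.complexity : ℤ) =
      (-1) ^ ((s : ℕ) + (t : ℕ) + n) *
        (Matrix.of fun i j : Fin n => G.lap (s.succAbove i) (t.succAbove j)).det := by
  classical
  obtain ⟨enum, henum⟩ : ∃ enum : Set.powersetCard E n → (Fin n ↪ E),
      ∀ S, Set.powersetCard.ofFinEmb n E (enum S) = S :=
    ⟨_, Function.surjInv_eq (Set.powersetCard.ofFinEmb_surjective n E)⟩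
  have hterm (S : Set.powersetCard E n) :
      (((G.incMatrix ℤ).submatrix s.succAbove id).submatrix id (enum S)).det *
        (((G.incMatrix ℤ).submatrix t.succAbove id)ᵀ.submatrix (enum S) id).det =
      (-1) ^ ((s : ℕ) + (t : ℕ)) * if G.IsSpanningTree S.val then 1 else 0 := by
    have hS : univ.map (enum S) = S.val := by
      rw [← Set.powersetCard.val_ofFinEmb, henum]
    rw [← Matrix.transpose_submatrix, Matrix.det_transpose, Matrix.submatrix_submatrix,
      Matrix.submatrix_submatrix, ← hS]
    exact G.det_incMatrix_submatrix_succAbove_mul s t (enum S)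
  have hsign :
      (-1 : ℤ) ^ ((s : ℕ) + (t : ℕ) + n) * (-1) ^ n * (-1) ^ ((s : ℕ) + (t : ℕ)) = 1 := by
    rw [← pow_add, ← pow_add]
    exact Even.neg_one_pow ⟨(s : ℕ) + (t : ℕ) + n, by ring⟩
  rw [G.lap_submatrix_succAbove, Matrix.det_neg, Fintype.card_fin,
    Matrix.det_mul_eq_sum_powersetCard enum henum, Finset.sum_congr rfl fun S _ => hterm S,
    ← Finset.mul_sum, Finset.sum_boole, G.complexity_eq_card_powersetCard, ← mul_assoc,
    ← mul_assoc, hsign, one_mul]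

open Multigraph in
/-- The Matrix Tree Theorem: for a finite connected loopless multigraph on `γ = n + 1`
vertices with intersection (Laplacian-type) matrix `M`, the number of spanning trees is
`(-1) ^ (s + t + γ - 1) * det (M with row s and column t deleted)`. -/
theorem matrix_tree_theorem {n : ℕ} {E : Type} [Fintype E]
    (G : Multigraph (Fin (n + 1)) E) (hl : G.Loopless) (hc : G.Connected)
    (s t : Fin (n + 1)) :
    (G.complexity : ℤ) =
      (-1) ^ ((s : ℕ) + (t : ℕ) + n) *
        (Matrix.of fun i j : Fin n => G.lap (s.succAbove i) (t.succAbove j)).det :=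
  matrix_tree_theorem_general G s t
end

section
/- Let Γ be a connected multigraph obtained by gluing two connected multigraphs Γ₁ and Γ₂ at a single vertex. Then the degree class group of Γ is isomorphic to the direct sum of the degree class groups of Γ₁ and Γ₂: Δ_Γ ≅ Δ_{Γ₁} ⊕ Δ_{Γ₂}. -/
namespace Multigraph

/-- Glue two multigraphs at a single vertex, identifying `v₁` and `v₂`. -/
def glue {V₁ E₁ V₂ E₂ : Type} [DecidableEq V₂]
    (G₁ : Multigraph V₁ E₁) (G₂ : Multigraph V₂ E₂) (v₁ : V₁) (v₂ : V₂) :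
    Multigraph (V₁ ⊕ {x : V₂ // x ≠ v₂}) (E₁ ⊕ E₂) where
  ends
  | Sum.inl e => (G₁.ends e).map Sum.inl
  | Sum.inr e => (G₂.ends e).map fun x =>
      if h : x = v₂ then Sum.inl v₁ else Sum.inr ⟨x, h⟩

end Multigraph


namespace Multigraph

section Lemmas
variable {V E : Type} [Fintype V] [DecidableEq V]

lemma edgeCount_comm (G : Multigraph V E) (x y : V) : G.edgeCount x y = G.edgeCount y x := by
  unfold edgeCount
  rw [Sym2.eq_swap]

lemma lap_rowsum (G : Multigraph V E) (i : V) : ∑ j, G.lap i j = 0 := by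
  rw [← Finset.add_sum_erase _ _ (Finset.mem_univ i)]
  unfold lap
  rw [if_pos rfl]
  rw [Finset.sum_congr rfl (fun j hj => if_neg (Finset.ne_of_mem_erase hj).symm)]
  ring

lemma lap_comm (G : Multigraph V E) (i j : V) : G.lap i j = G.lap j i := by
  unfold lap
  rcases eq_or_ne i j with rfl | h
  · rfl
  · rw [if_neg h, if_neg h.symm, G.edgeCount_comm]

lemma lap_colsum (G : Multigraph V E) (j : V) : ∑ i, G.lap i j = 0 := by
  rw [Finset.sum_congr rfl fun i _ => G.lap_comm i j]
  exact G.lap_rowsum j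

/-- The `j`-th column of the Laplacian as an element of the zero-sum lattice. -/
noncomputable def lapCol (G : Multigraph V E) (j : V) : zeroSum V :=
  ⟨fun i => G.lap i j, G.lap_colsum j⟩

lemma lapLattice_le_zeroSum (G : Multigraph V E) : G.lapLattice ≤ zeroSum V := by
  rw [lapLattice, AddSubgroup.closure_le]
  rintro _ ⟨j, rfl⟩
  exact G.lap_colsum j

lemma lapLattice_addSubgroupOf (G : Multigraph V E) :
    G.lapLattice.addSubgroupOf (zeroSum V) = AddSubgroup.closure (Set.range G.lapCol) := by
  apply AddSubgroup.map_injective (zeroSum V).subtype_injective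
  rw [AddSubgroup.addSubgroupOf_map_subtype, inf_eq_left.mpr G.lapLattice_le_zeroSum,
    AddMonoidHom.map_closure, ← Set.range_comp]
  rfl

lemma sum_lapCol (G : Multigraph V E) : ∑ j, G.lapCol j = 0 := by
  apply Subtype.ext
  have h : ((∑ j, G.lapCol j : zeroSum V) : V → ℤ) = ∑ j, (G.lapCol j : V → ℤ) :=
    map_sum (zeroSum V).subtype _ _
  rw [h]
  funext i
  simpa [lapCol] using G.lap_rowsum i

end Lemmas

end Multigraph

/-- quotient of product -/
noncomputable def prodQuot {A B : Type*} [AddCommGroup A] [AddCommGroup B]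
    (H : AddSubgroup A) (K : AddSubgroup B) :
    (A × B) ⧸ (H.prod K) ≃+ (A ⧸ H) × (B ⧸ K) := by
  have hker : ((QuotientAddGroup.mk' H).prodMap (QuotientAddGroup.mk' K)).ker = H.prod K := by
    ext ⟨a, b⟩
    simp [AddMonoidHom.mem_ker, Prod.ext_iff, AddSubgroup.mem_prod,
      QuotientAddGroup.eq_zero_iff]
  exact hker ▸ QuotientAddGroup.quotientKerEquivOfSurjective _ (by
      rintro ⟨⟨a⟩, ⟨b⟩⟩; exact ⟨(a, b), rfl⟩)

namespace Multigraph

section SumHelpers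

variable {M : Type*} [AddCommGroup M] {α : Type} [Fintype α] [DecidableEq α]

lemma sum_subtype_ne (v : α) (h : α → M) :
    ∑ x : {x : α // x ≠ v}, h x.val = ∑ y, h y - h v := by
  rw [show (∑ x : {x : α // x ≠ v}, h x.val) = ∑ y ∈ Finset.univ.erase v, h y from
    (Finset.sum_subtype _ (by simp) h).symm, Finset.sum_erase_eq_sub (Finset.mem_univ v)]

lemma sum_dite_ne (v : α) (a : M) (g : {x : α // x ≠ v} → M) :
    ∑ y : α, (if h : y = v then a else g ⟨y, h⟩) = a + ∑ x : {x : α // x ≠ v}, g x := by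
  rw [← Finset.add_sum_erase _ _ (Finset.mem_univ v), dif_pos rfl]
  congr 1
  rw [Finset.sum_subtype (p := fun y => y ≠ v) (Finset.univ.erase v) (by simp)
    (fun y => if h : y = v then a else g ⟨y, h⟩)]
  exact Finset.sum_congr rfl fun x _ => by rw [dif_neg x.2]

lemma sum_ite_eq_sub (v : α) (a : M) (g : α → M) :
    ∑ y : α, (if y = v then a else g y) = a + (∑ y, g y - g v) := by
  rw [← Finset.add_sum_erase _ _ (Finset.mem_univ v), if_pos rfl,
    Finset.sum_congr rfl (fun y hy => if_neg (Finset.ne_of_mem_erase hy)),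
    Finset.sum_erase_eq_sub (Finset.mem_univ v)]

end SumHelpers

section Glue

variable {V₁ E₁ V₂ E₂ : Type} [Fintype V₁] [Fintype V₂] [Fintype E₁] [Fintype E₂]
    [DecidableEq V₁] [DecidableEq V₂]

/-- The vertex identification map used in `glue`. -/
def gf (v₁ : V₁) (v₂ : V₂) (x : V₂) : V₁ ⊕ {x : V₂ // x ≠ v₂} :=
  if h : x = v₂ then Sum.inl v₁ else Sum.inr ⟨x, h⟩

variable (v₁ : V₁) (v₂ : V₂)

lemma gf_v₂ : gf v₁ v₂ v₂ = Sum.inl v₁ := dif_pos rfl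

lemma gf_val (x : {x : V₂ // x ≠ v₂}) : gf v₁ v₂ x.val = Sum.inr x := dif_neg x.2

lemma gf_eq_inl {x : V₂} {w : V₁} (h : gf v₁ v₂ x = Sum.inl w) : x = v₂ ∧ w = v₁ := by
  unfold gf at h
  split_ifs at h with h1
  exact ⟨h1, (Sum.inl.inj h).symm⟩

lemma gf_injective : Function.Injective (gf v₁ v₂) := by
  intro a b hab
  unfold gf at hab
  split_ifs at hab with h1 h2 h2 <;> simp_all

variable (G₁ : Multigraph V₁ E₁) (G₂ : Multigraph V₂ E₂)

lemma glue_ends_inl (e : E₁) :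
    (G₁.glue G₂ v₁ v₂).ends (Sum.inl e) = (G₁.ends e).map Sum.inl := rfl

lemma glue_ends_inr (e : E₂) :
    (G₁.glue G₂ v₁ v₂).ends (Sum.inr e) = (G₂.ends e).map (gf v₁ v₂) := rfl

lemma edgeCount_glue_inl_inl {i j : V₁} (h : ¬(i = v₁ ∧ j = v₁)) :
    (G₁.glue G₂ v₁ v₂).edgeCount (Sum.inl i) (Sum.inl j) = G₁.edgeCount i j := by
  unfold edgeCount
  rw [show {e : E₁ ⊕ E₂ | (G₁.glue G₂ v₁ v₂).ends e = s(Sum.inl i, Sum.inl j)}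
      = Sum.inl '' {e : E₁ | G₁.ends e = s(i, j)} from ?_,
    Set.ncard_image_of_injective _ Sum.inl_injective]
  ext e
  cases e with
  | inl e =>
    simp only [Set.mem_setOf_eq, Set.mem_image, glue_ends_inl]
    constructor
    · intro he
      exact ⟨e, Sym2.map.injective Sum.inl_injective
        (by rw [he, Sym2.map_pair_eq]), rfl⟩
    · rintro ⟨e', he', he''⟩
      obtain rfl : e' = e := Sum.inl_injective he''
      rw [he', Sym2.map_pair_eq]
  | inr e =>
    simp only [Set.mem_setOf_eq, Set.mem_image, glue_ends_inr]
    constructor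
    · intro he
      exfalso
      have hi : Sum.inl i ∈ Sym2.map (gf v₁ v₂) (G₂.ends e) := by
        rw [he]; exact Sym2.mem_mk_left _ _
      have hj : Sum.inl j ∈ Sym2.map (gf v₁ v₂) (G₂.ends e) := by
        rw [he]; exact Sym2.mem_mk_right _ _
      obtain ⟨a, -, ha⟩ := Sym2.mem_map.mp hi
      obtain ⟨b, -, hb⟩ := Sym2.mem_map.mp hj
      exact h ⟨(gf_eq_inl v₁ v₂ ha).2.symm ▸ rfl, (gf_eq_inl v₁ v₂ hb).2.symm ▸ rfl⟩
    · rintro ⟨e', -, he''⟩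
      exact absurd he'' (by simp)

lemma edgeCount_glue_inl_inr_ne {i : V₁} (hi : i ≠ v₁) (x : {x : V₂ // x ≠ v₂}) :
    (G₁.glue G₂ v₁ v₂).edgeCount (Sum.inl i) (Sum.inr x) = 0 := by
  unfold edgeCount
  rw [show {e : E₁ ⊕ E₂ | (G₁.glue G₂ v₁ v₂).ends e = s(Sum.inl i, Sum.inr x)}
      = (∅ : Set (E₁ ⊕ E₂)) from ?_, Set.ncard_empty]
  ext e
  simp only [Set.mem_empty_iff_false, iff_false, Set.mem_setOf_eq]
  cases e with
  | inl e =>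
    intro he
    have hx : Sum.inr x ∈ Sym2.map (Sum.inl : V₁ → V₁ ⊕ {x : V₂ // x ≠ v₂}) (G₁.ends e) := by
      rw [show Sym2.map Sum.inl (G₁.ends e) = _ from he]; exact Sym2.mem_mk_right _ _
    obtain ⟨a, -, ha⟩ := Sym2.mem_map.mp hx
    exact absurd ha (by simp)
  | inr e =>
    intro he
    have hx : Sum.inl i ∈ Sym2.map (gf v₁ v₂) (G₂.ends e) := by
      rw [show Sym2.map (gf v₁ v₂) (G₂.ends e) = _ from he]; exact Sym2.mem_mk_left _ _
    obtain ⟨a, -, ha⟩ := Sym2.mem_map.mp hx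
    exact hi (gf_eq_inl v₁ v₂ ha).2

lemma edgeCount_glue_inl_inr (x : {x : V₂ // x ≠ v₂}) :
    (G₁.glue G₂ v₁ v₂).edgeCount (Sum.inl v₁) (Sum.inr x) = G₂.edgeCount v₂ x.val := by
  unfold edgeCount
  rw [show {e : E₁ ⊕ E₂ | (G₁.glue G₂ v₁ v₂).ends e = s(Sum.inl v₁, Sum.inr x)}
      = Sum.inr '' {e : E₂ | G₂.ends e = s(v₂, x.val)} from ?_,
    Set.ncard_image_of_injective _ Sum.inr_injective]
  ext e
  cases e with
  | inl e =>
    simp only [Set.mem_setOf_eq, Set.mem_image, glue_ends_inl]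
    constructor
    · intro he
      exfalso
      have hx : Sum.inr x ∈ Sym2.map (Sum.inl : V₁ → V₁ ⊕ {x : V₂ // x ≠ v₂}) (G₁.ends e) := by
        rw [he]; exact Sym2.mem_mk_right _ _
      obtain ⟨a, -, ha⟩ := Sym2.mem_map.mp hx
      exact absurd ha (by simp)
    · rintro ⟨e', -, he''⟩
      exact absurd he'' (by simp)
  | inr e =>
    simp only [Set.mem_setOf_eq, Set.mem_image, glue_ends_inr]
    constructor
    · intro he
      refine ⟨e, ?_, rfl⟩
      apply Sym2.map.injective (gf_injective v₁ v₂)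
      rw [he, Sym2.map_pair_eq, gf_v₂, gf_val]
    · rintro ⟨e', he', he''⟩
      obtain rfl : e' = e := Sum.inr_injective he''
      rw [he', Sym2.map_pair_eq, gf_v₂, gf_val]

lemma edgeCount_glue_inr_inr (x y : {x : V₂ // x ≠ v₂}) :
    (G₁.glue G₂ v₁ v₂).edgeCount (Sum.inr x) (Sum.inr y) = G₂.edgeCount x.val y.val := by
  unfold edgeCount
  rw [show {e : E₁ ⊕ E₂ | (G₁.glue G₂ v₁ v₂).ends e = s(Sum.inr x, Sum.inr y)}
      = Sum.inr '' {e : E₂ | G₂.ends e = s(x.val, y.val)} from ?_,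
    Set.ncard_image_of_injective _ Sum.inr_injective]
  ext e
  cases e with
  | inl e =>
    simp only [Set.mem_setOf_eq, Set.mem_image, glue_ends_inl]
    constructor
    · intro he
      exfalso
      have hx : Sum.inr x ∈ Sym2.map (Sum.inl : V₁ → V₁ ⊕ {x : V₂ // x ≠ v₂}) (G₁.ends e) := by
        rw [he]; exact Sym2.mem_mk_left _ _
      obtain ⟨a, -, ha⟩ := Sym2.mem_map.mp hx
      exact absurd ha (by simp)
    · rintro ⟨e', -, he''⟩
      exact absurd he'' (by simp)
  | inr e =>
    simp only [Set.mem_setOf_eq, Set.mem_image, glue_ends_inr]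
    constructor
    · intro he
      refine ⟨e, ?_, rfl⟩
      apply Sym2.map.injective (gf_injective v₁ v₂)
      rw [he, Sym2.map_pair_eq, gf_val, gf_val]
    · rintro ⟨e', he', he''⟩
      obtain rfl : e' = e := Sum.inr_injective he''
      rw [he', Sym2.map_pair_eq, gf_val, gf_val]

end Glue

end Multigraph

namespace Multigraph

section SumErase

variable {A B : Type} [Fintype A] [Fintype B] [DecidableEq A] [DecidableEq B]
  {M : Type*} [AddCommGroup M]

lemma sum_erase_inl (a : A) (f : A ⊕ B → M) :
    ∑ w ∈ Finset.univ.erase (Sum.inl a), f w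
      = (∑ w ∈ Finset.univ.erase a, f (Sum.inl w)) + ∑ b, f (Sum.inr b) := by
  rw [Finset.sum_erase_eq_sub (Finset.mem_univ _), Fintype.sum_sum_type,
    Finset.sum_erase_eq_sub (Finset.mem_univ a)]
  abel

lemma sum_erase_inr (b : B) (f : A ⊕ B → M) :
    ∑ w ∈ Finset.univ.erase (Sum.inr b), f w
      = (∑ a, f (Sum.inl a)) + ∑ w ∈ Finset.univ.erase b, f (Sum.inr w) := by
  rw [Finset.sum_erase_eq_sub (Finset.mem_univ _), Fintype.sum_sum_type,
    Finset.sum_erase_eq_sub (Finset.mem_univ b)]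
  abel

end SumErase

section Split

variable {V₁ V₂ : Type} [Fintype V₁] [Fintype V₂] [DecidableEq V₁] [DecidableEq V₂]

/-- First component of the splitting map. -/
def splitFun₁ (v₁ : V₁) (v₂ : V₂) (z : (V₁ ⊕ {x : V₂ // x ≠ v₂}) → ℤ) : V₁ → ℤ :=
  fun u => if u = v₁ then z (Sum.inl v₁) + ∑ x : {x : V₂ // x ≠ v₂}, z (Sum.inr x)
    else z (Sum.inl u)

/-- Second component of the splitting map. -/
def splitFun₂ (v₂ : V₂) (z : (V₁ ⊕ {x : V₂ // x ≠ v₂}) → ℤ) : V₂ → ℤ :=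
  fun y => if h : y = v₂ then -∑ x : {x : V₂ // x ≠ v₂}, z (Sum.inr x)
    else z (Sum.inr ⟨y, h⟩)

/-- Inverse of the splitting map. -/
def joinFun (v₁ : V₁) (v₂ : V₂) (p : (V₁ → ℤ) × (V₂ → ℤ)) : (V₁ ⊕ {x : V₂ // x ≠ v₂}) → ℤ :=
  Sum.elim (fun u => if u = v₁ then p.1 v₁ + p.2 v₂ else p.1 u) (fun x => p.2 x.val)

variable (v₁ : V₁) (v₂ : V₂)

lemma splitFun₁_sum (z : (V₁ ⊕ {x : V₂ // x ≠ v₂}) → ℤ) (hz : ∑ w, z w = 0) :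
    ∑ u, splitFun₁ v₁ v₂ z u = 0 := by
  unfold splitFun₁
  rw [Fintype.sum_sum_type] at hz
  rw [sum_ite_eq_sub]
  linarith

lemma splitFun₂_sum (z : (V₁ ⊕ {x : V₂ // x ≠ v₂}) → ℤ) :
    ∑ y, splitFun₂ v₂ z y = 0 := by
  unfold splitFun₂
  rw [sum_dite_ne v₂ _ (fun x => z (Sum.inr x))]
  exact neg_add_cancel _

lemma joinFun_sum (p : (V₁ → ℤ) × (V₂ → ℤ)) (h1 : ∑ u, p.1 u = 0) (h2 : ∑ y, p.2 y = 0) :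
    ∑ w, joinFun v₁ v₂ p w = 0 := by
  unfold joinFun
  rw [Fintype.sum_sum_type]
  simp only [Sum.elim_inl, Sum.elim_inr]
  rw [sum_ite_eq_sub, sum_subtype_ne v₂]
  linarith

lemma join_split (z : (V₁ ⊕ {x : V₂ // x ≠ v₂}) → ℤ) :
    joinFun v₁ v₂ (splitFun₁ v₁ v₂ z, splitFun₂ v₂ z) = z := by
  funext w
  cases w with
  | inl u =>
    show (if u = v₁ then splitFun₁ v₁ v₂ z v₁ + splitFun₂ v₂ z v₂ else splitFun₁ v₁ v₂ z u)
      = z (Sum.inl u)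
    unfold splitFun₁ splitFun₂
    split_ifs with h h1 h2 h3 <;>
      first | rfl | (subst h; linarith) | (exfalso; simp_all)
  | inr x =>
    show splitFun₂ v₂ z x.val = z (Sum.inr x)
    unfold splitFun₂
    rw [dif_neg x.2]

lemma split_join₁ (p : (V₁ → ℤ) × (V₂ → ℤ)) (h2 : ∑ y, p.2 y = 0) :
    splitFun₁ v₁ v₂ (joinFun v₁ v₂ p) = p.1 := by
  funext u
  unfold splitFun₁ joinFun
  simp only [Sum.elim_inl, Sum.elim_inr]
  rw [sum_subtype_ne v₂]
  split_ifs with h h1 h2 <;>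
    first | rfl | (subst h; linarith) | (exfalso; simp_all)

lemma split_join₂ (p : (V₁ → ℤ) × (V₂ → ℤ)) (h2 : ∑ y, p.2 y = 0) :
    splitFun₂ v₂ (joinFun v₁ v₂ p) = p.2 := by
  funext y
  unfold splitFun₂ joinFun
  simp only [Sum.elim_inl, Sum.elim_inr]
  split_ifs with h <;>
    first | rfl | (rw [h, sum_subtype_ne v₂]; linarith)

variable {v₁ v₂} in
/-- Splitting a zero-sum vector on the glued vertex set into a pair of zero-sum vectors. -/
noncomputable def splitEquiv (v₁ : V₁) (v₂ : V₂) :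
    zeroSum (V₁ ⊕ {x : V₂ // x ≠ v₂}) ≃+ zeroSum V₁ × zeroSum V₂ :=
  AddEquiv.mk'
    { toFun := fun z => (⟨splitFun₁ v₁ v₂ z.val, splitFun₁_sum v₁ v₂ z.val z.2⟩,
        ⟨splitFun₂ v₂ z.val, splitFun₂_sum v₂ z.val⟩)
      invFun := fun p => ⟨joinFun v₁ v₂ (p.1.val, p.2.val),
        joinFun_sum v₁ v₂ _ p.1.2 p.2.2⟩
      left_inv := fun z => Subtype.ext (join_split v₁ v₂ z.val)
      right_inv := fun p => Prod.ext
        (Subtype.ext (split_join₁ v₁ v₂ (p.1.val, p.2.val) p.2.2))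
        (Subtype.ext (split_join₂ v₁ v₂ (p.1.val, p.2.val) p.2.2)) }
    (by
      intro z w
      refine Prod.ext (Subtype.ext ?_) (Subtype.ext ?_) <;>
        simp only [Equiv.coe_fn_mk, Prod.fst_add, Prod.snd_add, AddSubgroup.coe_add] <;>
        funext u
      · unfold splitFun₁
        simp only [Pi.add_apply, Finset.sum_add_distrib]
        split_ifs <;> ring
      · unfold splitFun₂
        simp only [Pi.add_apply, Finset.sum_add_distrib]
        split_ifs <;> ring)

lemma splitEquiv_fst (v₁ : V₁) (v₂ : V₂) (z : zeroSum (V₁ ⊕ {x : V₂ // x ≠ v₂})) :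
    ((splitEquiv v₁ v₂ z).1).val = splitFun₁ v₁ v₂ z.val := rfl

lemma splitEquiv_snd (v₁ : V₁) (v₂ : V₂) (z : zeroSum (V₁ ⊕ {x : V₂ // x ≠ v₂})) :
    ((splitEquiv v₁ v₂ z).2).val = splitFun₂ v₂ z.val := rfl

end Split

end Multigraph

namespace Multigraph

lemma lapCol_val {V E : Type} [Fintype V] [DecidableEq V] (G : Multigraph V E) (j i : V) :
    (G.lapCol j).val i = G.lap i j := rfl

section GlueLap

variable {V₁ E₁ V₂ E₂ : Type} [Fintype V₁] [Fintype V₂] [Fintype E₁] [Fintype E₂]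
    [DecidableEq V₁] [DecidableEq V₂]
    (v₁ : V₁) (v₂ : V₂) (G₁ : Multigraph V₁ E₁) (G₂ : Multigraph V₂ E₂)

lemma lap_glue_inl_inr (i : V₁) (x : {x : V₂ // x ≠ v₂}) :
    (G₁.glue G₂ v₁ v₂).lap (Sum.inl i) (Sum.inr x)
      = if i = v₁ then (G₂.edgeCount v₂ x.val : ℤ) else 0 := by
  unfold lap
  rw [if_neg (by simp)]
  rcases eq_or_ne i v₁ with hi | hi
  · rw [if_pos hi, hi, edgeCount_glue_inl_inr]
  · rw [if_neg hi, edgeCount_glue_inl_inr_ne v₁ v₂ G₁ G₂ hi x, Nat.cast_zero]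

lemma lap_glue_inr_inl (x : {x : V₂ // x ≠ v₂}) (j : V₁) :
    (G₁.glue G₂ v₁ v₂).lap (Sum.inr x) (Sum.inl j)
      = if j = v₁ then (G₂.edgeCount v₂ x.val : ℤ) else 0 := by
  unfold lap
  rw [if_neg (by simp), edgeCount_comm]
  rcases eq_or_ne j v₁ with hj | hj
  · rw [if_pos hj, hj, edgeCount_glue_inl_inr]
  · rw [if_neg hj, edgeCount_glue_inl_inr_ne v₁ v₂ G₁ G₂ hj x, Nat.cast_zero]

lemma lap_glue_inl_inl_ne {i j : V₁} (hij : i ≠ j) :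
    (G₁.glue G₂ v₁ v₂).lap (Sum.inl i) (Sum.inl j) = (G₁.edgeCount i j : ℤ) := by
  unfold lap
  rw [if_neg (by simpa using hij),
    edgeCount_glue_inl_inl v₁ v₂ G₁ G₂ (fun h => hij (h.1.trans h.2.symm))]

lemma lap_glue_inr_inr_ne {x y : {x : V₂ // x ≠ v₂}} (hxy : x ≠ y) :
    (G₁.glue G₂ v₁ v₂).lap (Sum.inr x) (Sum.inr y) = (G₂.edgeCount x.val y.val : ℤ) := by
  unfold lap
  rw [if_neg (by simpa using hxy), edgeCount_glue_inr_inr]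

lemma lap_glue_inl_diag {u : V₁} (hu : u ≠ v₁) :
    (G₁.glue G₂ v₁ v₂).lap (Sum.inl u) (Sum.inl u) = G₁.lap u u := by
  unfold lap
  rw [if_pos rfl, if_pos rfl, sum_erase_inl,
    Finset.sum_congr rfl (fun (j : V₁) _ => by
      rw [edgeCount_glue_inl_inl v₁ v₂ G₁ G₂ (fun h => hu h.1)]),
    Finset.sum_congr rfl (fun (x : {x : V₂ // x ≠ v₂}) _ => by
      rw [edgeCount_glue_inl_inr_ne v₁ v₂ G₁ G₂ hu x, Nat.cast_zero]),
    Finset.sum_const_zero]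
  ring

lemma lap_glue_inl_v₁_diag :
    (G₁.glue G₂ v₁ v₂).lap (Sum.inl v₁) (Sum.inl v₁)
      = G₁.lap v₁ v₁ - ∑ x : {x : V₂ // x ≠ v₂}, (G₂.edgeCount v₂ x.val : ℤ) := by
  unfold lap
  rw [if_pos rfl, if_pos rfl, sum_erase_inl,
    Finset.sum_congr rfl (fun (j : V₁) hj => by
      rw [edgeCount_glue_inl_inl v₁ v₂ G₁ G₂ (fun h => (Finset.ne_of_mem_erase hj) h.2)]),
    Finset.sum_congr rfl (fun (x : {x : V₂ // x ≠ v₂}) _ => by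
      rw [edgeCount_glue_inl_inr v₁ v₂ G₁ G₂ x])]
  ring

lemma lap_glue_inr_diag (x₀ : {x : V₂ // x ≠ v₂}) :
    (G₁.glue G₂ v₁ v₂).lap (Sum.inr x₀) (Sum.inr x₀) = G₂.lap x₀.val x₀.val := by
  have h1 : ∑ a : V₁, ((G₁.glue G₂ v₁ v₂).edgeCount (Sum.inr x₀) (Sum.inl a) : ℤ)
      = (G₂.edgeCount v₂ x₀.val : ℤ) := by
    have hterm : ∀ a : V₁, ((G₁.glue G₂ v₁ v₂).edgeCount (Sum.inr x₀) (Sum.inl a) : ℤ)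
        = if a = v₁ then (G₂.edgeCount v₂ x₀.val : ℤ) else 0 := by
      intro a
      rcases eq_or_ne a v₁ with ha | ha
      · rw [if_pos ha, ha, edgeCount_comm, edgeCount_glue_inl_inr]
      · rw [if_neg ha, edgeCount_comm, edgeCount_glue_inl_inr_ne v₁ v₂ G₁ G₂ ha x₀,
          Nat.cast_zero]
    rw [Finset.sum_congr rfl (fun a _ => hterm a), Finset.sum_ite_eq',
      if_pos (Finset.mem_univ v₁)]
  unfold lap
  rw [if_pos rfl, if_pos rfl, sum_erase_inr, h1,
    Finset.sum_congr rfl (fun (x : {x : V₂ // x ≠ v₂}) _ => by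
      rw [edgeCount_glue_inr_inr v₁ v₂ G₁ G₂ x₀ x]),
    Finset.sum_erase_eq_sub (Finset.mem_univ x₀),
    sum_subtype_ne v₂ (fun y => (G₂.edgeCount x₀.val y : ℤ)),
    Finset.sum_erase_eq_sub (Finset.mem_univ x₀.val), G₂.edgeCount_comm v₂ x₀.val]
  ring

lemma split_lapCol_inr (x₀ : {x : V₂ // x ≠ v₂}) :
    splitEquiv v₁ v₂ ((G₁.glue G₂ v₁ v₂).lapCol (Sum.inr x₀))
      = (0, G₂.lapCol x₀.val) := by
  have hT : ∑ x : {x : V₂ // x ≠ v₂}, (G₁.glue G₂ v₁ v₂).lap (Sum.inr x) (Sum.inr x₀)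
      = -(G₂.edgeCount v₂ x₀.val : ℤ) := by
    rw [← Finset.add_sum_erase _ _ (Finset.mem_univ x₀), lap_glue_inr_diag,
      Finset.sum_congr rfl (fun x hx =>
        lap_glue_inr_inr_ne v₁ v₂ G₁ G₂ (Finset.ne_of_mem_erase hx)),
      Finset.sum_erase_eq_sub (Finset.mem_univ x₀),
      sum_subtype_ne v₂ (fun y => (G₂.edgeCount y x₀.val : ℤ)),
      Finset.sum_congr rfl (fun (y : V₂) _ =>
        show ((G₂.edgeCount y x₀.val : ℤ)) = (G₂.edgeCount x₀.val y : ℤ) by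
          rw [G₂.edgeCount_comm y x₀.val])]
    unfold lap
    rw [if_pos rfl, Finset.sum_erase_eq_sub (Finset.mem_univ x₀.val),
      G₂.edgeCount_comm v₂ x₀.val]
    ring
  refine Prod.ext ?_ ?_ <;> apply Subtype.ext
  · rw [splitEquiv_fst]
    funext u
    unfold splitFun₁
    simp only [lapCol_val]
    rw [hT]
    show _ = ((0 : zeroSum V₁) : V₁ → ℤ) u
    rcases eq_or_ne u v₁ with hu | hu
    · rw [if_pos hu, hu, lap_glue_inl_inr, if_pos rfl]
      simp
    · rw [if_neg hu, lap_glue_inl_inr, if_neg hu]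
      simp
  · rw [splitEquiv_snd]
    funext y
    unfold splitFun₂
    simp only [lapCol_val]
    rw [hT]
    show _ = G₂.lap y x₀.val
    rcases eq_or_ne v₂ y with rfl | hy
    · rw [dif_pos rfl, neg_neg]
      unfold lap
      rw [if_neg (fun h => x₀.2 h.symm)]
    · rw [dif_neg (Ne.symm hy)]
      rcases eq_or_ne y x₀.val with hyx | hyx
      · rw [show (⟨y, Ne.symm hy⟩ : {x : V₂ // x ≠ v₂}) = x₀ from Subtype.ext hyx,
          lap_glue_inr_diag, hyx]
      · rw [lap_glue_inr_inr_ne v₁ v₂ G₁ G₂ (fun h => hyx (congrArg Subtype.val h))]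
        unfold lap
        rw [if_neg hyx]

lemma split_lapCol_inl_ne {u : V₁} (hu : u ≠ v₁) :
    splitEquiv v₁ v₂ ((G₁.glue G₂ v₁ v₂).lapCol (Sum.inl u))
      = (G₁.lapCol u, 0) := by
  have hS : ∑ x : {x : V₂ // x ≠ v₂}, (G₁.glue G₂ v₁ v₂).lap (Sum.inr x) (Sum.inl u) = 0 := by
    rw [Finset.sum_congr rfl (fun (x : {x : V₂ // x ≠ v₂}) _ =>
      lap_glue_inr_inl v₁ v₂ G₁ G₂ x u)]
    simp [hu]
  refine Prod.ext ?_ ?_ <;> apply Subtype.ext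
  · rw [splitEquiv_fst]
    funext w
    unfold splitFun₁
    simp only [lapCol_val]
    rw [hS]
    show _ = G₁.lap w u
    rcases eq_or_ne v₁ w with rfl | hw
    · rw [if_pos rfl, add_zero, lap_glue_inl_inl_ne v₁ v₂ G₁ G₂ (Ne.symm hu)]
      unfold lap
      rw [if_neg (Ne.symm hu)]
    · rw [if_neg (Ne.symm hw)]
      rcases eq_or_ne w u with rfl | hwu
      · rw [lap_glue_inl_diag v₁ v₂ G₁ G₂ hu]
      · rw [lap_glue_inl_inl_ne v₁ v₂ G₁ G₂ hwu]
        unfold lap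
        rw [if_neg hwu]
  · rw [splitEquiv_snd]
    funext y
    unfold splitFun₂
    simp only [lapCol_val]
    rw [hS]
    show _ = ((0 : zeroSum V₂) : V₂ → ℤ) y
    rcases eq_or_ne v₂ y with rfl | hy
    · rw [dif_pos rfl]
      simp
    · rw [dif_neg (Ne.symm hy), lap_glue_inr_inl v₁ v₂ G₁ G₂ ⟨y, Ne.symm hy⟩ u, if_neg hu]
      simp

lemma split_lapCol_inl_v₁ :
    splitEquiv v₁ v₂ ((G₁.glue G₂ v₁ v₂).lapCol (Sum.inl v₁))
      = (G₁.lapCol v₁, G₂.lapCol v₂) := by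
  have hS : ∑ x : {x : V₂ // x ≠ v₂}, (G₁.glue G₂ v₁ v₂).lap (Sum.inr x) (Sum.inl v₁)
      = ∑ x : {x : V₂ // x ≠ v₂}, (G₂.edgeCount v₂ x.val : ℤ) := by
    rw [Finset.sum_congr rfl (fun (x : {x : V₂ // x ≠ v₂}) _ =>
      lap_glue_inr_inl v₁ v₂ G₁ G₂ x v₁)]
    simp
  refine Prod.ext ?_ ?_ <;> apply Subtype.ext
  · rw [splitEquiv_fst]
    funext w
    unfold splitFun₁
    simp only [lapCol_val]
    rw [hS]
    show _ = G₁.lap w v₁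
    rcases eq_or_ne v₁ w with rfl | hw
    · rw [if_pos rfl, lap_glue_inl_v₁_diag]
      ring
    · rw [if_neg (Ne.symm hw), lap_glue_inl_inl_ne v₁ v₂ G₁ G₂ (Ne.symm hw)]
      unfold lap
      rw [if_neg (Ne.symm hw)]
  · rw [splitEquiv_snd]
    funext y
    unfold splitFun₂
    simp only [lapCol_val]
    rw [hS]
    show _ = G₂.lap y v₂
    rcases eq_or_ne v₂ y with rfl | hy
    · rw [dif_pos rfl]
      unfold lap
      rw [if_pos rfl, sum_subtype_ne v₂ (fun y => (G₂.edgeCount v₂ y : ℤ)),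
        Finset.sum_erase_eq_sub (Finset.mem_univ v₂)]
    · rw [dif_neg (Ne.symm hy), lap_glue_inr_inl v₁ v₂ G₁ G₂ ⟨y, Ne.symm hy⟩ v₁, if_pos rfl]
      unfold lap
      rw [if_neg (Ne.symm hy), G₂.edgeCount_comm v₂ y]

end GlueLap

end Multigraph

open Multigraph in
/-- The degree class group of a one-vertex gluing of two connected multigraphs is the
direct sum of the degree class groups. -/
theorem dcg_glue {V₁ E₁ V₂ E₂ : Type} [Fintype V₁] [Fintype V₂] [Fintype E₁] [Fintype E₂]
    [DecidableEq V₁] [DecidableEq V₂]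
    (G₁ : Multigraph V₁ E₁) (G₂ : Multigraph V₂ E₂)
    (h₁ : G₁.Connected) (h₂ : G₂.Connected) (v₁ : V₁) (v₂ : V₂) :
    Nonempty ((G₁.glue G₂ v₁ v₂).DCG ≃+ G₁.DCG × G₂.DCG) := by
  classical
  refine ⟨(QuotientAddGroup.congr
      ((G₁.glue G₂ v₁ v₂).lapLattice.addSubgroupOf (zeroSum (V₁ ⊕ {x : V₂ // x ≠ v₂})))
      ((G₁.lapLattice.addSubgroupOf (zeroSum V₁)).prod
        (G₂.lapLattice.addSubgroupOf (zeroSum V₂)))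
      (splitEquiv v₁ v₂) ?_).trans (prodQuot _ _)⟩
  rw [lapLattice_addSubgroupOf, lapLattice_addSubgroupOf, lapLattice_addSubgroupOf,
    AddMonoidHom.map_closure, ← Set.range_comp]
  simp only [AddMonoidHom.coe_coe]
  apply le_antisymm
  · rw [AddSubgroup.closure_le]
    rintro _ ⟨j, rfl⟩
    simp only [Function.comp_apply]
    rcases j with u | x
    · rcases eq_or_ne v₁ u with rfl | hu
      · rw [split_lapCol_inl_v₁ v₁ v₂ G₁ G₂]
        exact AddSubgroup.mem_prod.mpr
          ⟨AddSubgroup.subset_closure ⟨v₁, rfl⟩, AddSubgroup.subset_closure ⟨v₂, rfl⟩⟩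
      · rw [split_lapCol_inl_ne v₁ v₂ G₁ G₂ (Ne.symm hu)]
        exact AddSubgroup.mem_prod.mpr
          ⟨AddSubgroup.subset_closure ⟨u, rfl⟩, zero_mem _⟩
    · rw [split_lapCol_inr v₁ v₂ G₁ G₂ x]
      exact AddSubgroup.mem_prod.mpr
        ⟨zero_mem _, AddSubgroup.subset_closure ⟨x.val, rfl⟩⟩
  · have hKx : ∀ x : {x : V₂ // x ≠ v₂}, ((0 : zeroSum V₁), G₂.lapCol x.val)
        ∈ AddSubgroup.closure (Set.range
          (⇑(splitEquiv v₁ v₂) ∘ (G₁.glue G₂ v₁ v₂).lapCol)) := by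
      intro x
      have h := AddSubgroup.subset_closure
        (k := Set.range (⇑(splitEquiv v₁ v₂) ∘ (G₁.glue G₂ v₁ v₂).lapCol))
        ⟨Sum.inr x, rfl⟩
      rwa [Function.comp_apply, split_lapCol_inr v₁ v₂ G₁ G₂ x] at h
    have hKv2 : ((0 : zeroSum V₁), G₂.lapCol v₂)
        ∈ AddSubgroup.closure (Set.range
          (⇑(splitEquiv v₁ v₂) ∘ (G₁.glue G₂ v₁ v₂).lapCol)) := by
      have hcol : G₂.lapCol v₂ = -∑ x : {x : V₂ // x ≠ v₂}, G₂.lapCol x.val := by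
        have h1 := sum_subtype_ne (M := zeroSum V₂) v₂ (fun y => G₂.lapCol y)
        rw [sum_lapCol G₂, zero_sub] at h1
        rw [h1, neg_neg]
      have hpair : ((0 : zeroSum V₁), G₂.lapCol v₂)
          = -∑ x : {x : V₂ // x ≠ v₂}, ((0 : zeroSum V₁), G₂.lapCol x.val) := by
        rw [hcol]
        refine Prod.ext ?_ ?_ <;> simp [Prod.fst_sum, Prod.snd_sum]
      rw [hpair]
      exact neg_mem (sum_mem fun x _ => hKx x)
    rw [AddSubgroup.prod_le_iff]
    constructor
    · rw [AddMonoidHom.map_closure, AddSubgroup.closure_le]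
      rintro _ ⟨_, ⟨u, rfl⟩, rfl⟩
      rw [AddMonoidHom.inl_apply]
      rcases eq_or_ne v₁ u with rfl | hu
      · have h := AddSubgroup.subset_closure
          (k := Set.range (⇑(splitEquiv v₁ v₂) ∘ (G₁.glue G₂ v₁ v₂).lapCol))
          ⟨Sum.inl v₁, rfl⟩
        rw [Function.comp_apply, split_lapCol_inl_v₁ v₁ v₂ G₁ G₂] at h
        have h' := sub_mem h hKv2
        rwa [show ((G₁.lapCol v₁, G₂.lapCol v₂) : zeroSum V₁ × zeroSum V₂)
            - ((0 : zeroSum V₁), G₂.lapCol v₂) = (G₁.lapCol v₁, (0 : zeroSum V₂)) from by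
          refine Prod.ext ?_ ?_ <;> simp] at h'
      · have h := AddSubgroup.subset_closure
          (k := Set.range (⇑(splitEquiv v₁ v₂) ∘ (G₁.glue G₂ v₁ v₂).lapCol))
          ⟨Sum.inl u, rfl⟩
        rwa [Function.comp_apply, split_lapCol_inl_ne v₁ v₂ G₁ G₂ (Ne.symm hu)] at h
    · rw [AddMonoidHom.map_closure, AddSubgroup.closure_le]
      rintro _ ⟨_, ⟨y, rfl⟩, rfl⟩
      rw [AddMonoidHom.inr_apply]
      rcases eq_or_ne v₂ y with rfl | hy
      · exact hKv2
      · exact hKx ⟨y, Ne.symm hy⟩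
end

section
/- Let Γ be a connected multigraph with edges l_1,…,l_δ, none of which is a loop. Given a δ-tuple of nonnegative integers k = (k_1,…,k_δ), let B_k(Γ) be the graph obtained by subdividing each edge l_i into a path of k_i + 1 edges. Let S = {i : k_i ≠ 0}. Then c(B_k(Γ)) = Σ_{T ⊆ S} (Π_{i∈T} k_i) · c(Γ − {l_i : i ∈ T}), where c denotes the number of spanning trees (with c = 0 for disconnected graphs). -/
namespace Multigraph
variable {V : Type}

/-- The `j`-th vertex along the subdivision chain of the `i`-th edge. -/
def subAllVert {δ : ℕ} (a b : Fin δ → V) (k : Fin δ → ℕ) (i : Fin δ) (j : ℕ) :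
    V ⊕ Σ i : Fin δ, Fin (k i) :=
  if _h0 : j = 0 then Sum.inl (a i)
  else if h : j ≤ k i then Sum.inr ⟨i, ⟨j - 1, by omega⟩⟩
  else Sum.inl (b i)

/-- Subdivide the `i`-th edge (with endpoints `a i`, `b i`) into a path of `k i + 1`
edges, for every `i`. -/
def subdivideAll {δ : ℕ} (G : Multigraph V (Fin δ)) (a b : Fin δ → V) (k : Fin δ → ℕ) :
    Multigraph (V ⊕ Σ i : Fin δ, Fin (k i)) (Σ i : Fin δ, Fin (k i + 1)) :=
  ⟨fun e => s(subAllVert a b k e.1 e.2.1, subAllVert a b k e.1 (e.2.1 + 1))⟩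

/-- Delete all edges in the set `R`. -/
def deleteEdges {E : Type} (G : Multigraph V E) (R : Set E) : Multigraph V {f : E // f ∉ R} :=
  ⟨fun f => G.ends f.1⟩

end Multigraph

theorem Sym2.rel_of_mk_eq {α : Type*} {r : α → α → Prop} (hr : ∀ x y, r x y → r y x)
    {x y u v : α} (h : s(u, v) = s(x, y)) (huv : r u v) : r x y := by
  rcases Sym2.eq_iff.mp h with ⟨rfl, rfl⟩ | ⟨rfl, rfl⟩
  exacts [huv, hr _ _ huv]

namespace Finset

variable {ι : Type*} [Fintype ι] [DecidableEq ι]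

theorem card_filter_pi_option {β : ι → Type*} [∀ i, Fintype (β i)] [∀ i, DecidableEq (β i)]
    (P : Finset ι → Prop) [DecidablePred P] :
    #{f : ∀ i, Option (β i) | P {i | f i = none}} = ∑ U with P U, ∏ i ∈ Uᶜ, Fintype.card (β i) := by
  rw [card_eq_sum_card_fiberwise (f := fun f => ({i | f i = none} : Finset ι)) (t := {U | P U})
    fun f hf => by simpa using hf]
  refine sum_congr rfl fun U hU => ?_
  have hfiber : (({f : ∀ i, Option (β i) | P {i | f i = none}} : Finset _).filter
      fun f => ({i | f i = none} : Finset ι) = U) =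
        Fintype.piFinset fun i => if i ∈ U then {none} else univ.map .some := by
    ext f
    simp only [mem_filter, mem_univ, true_and, Fintype.mem_piFinset]
    constructor
    · rintro ⟨-, rfl⟩ i
      cases hfi : f i <;> simp [hfi]
    · intro hf
      have hnone : ({i | f i = none} : Finset ι) = U := by
        ext i
        have := hf i
        split_ifs at this with hi <;> simp_all [← Option.ne_none_iff_exists]
      exact ⟨hnone ▸ by simpa using hU, hnone⟩
  rw [hfiber, Fintype.card_piFinset, ← prod_compl_mul_prod U,
    prod_eq_one (s := U) fun i hi => by simp [hi], mul_one]
  exact prod_congr rfl fun i hi => by simp [mem_compl.1 hi]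

theorem sum_prod_compl_add_one (P : Finset ι → Prop) [DecidablePred P] (k : ι → ℕ) :
    ∑ U with P U, ∏ i ∈ Uᶜ, (k i + 1) =
      ∑ T ∈ ({i | k i ≠ 0} : Finset ι).powerset, (∏ i ∈ T, k i) * #{U | P U ∧ Disjoint U T} := by
  calc ∑ U with P U, ∏ i ∈ Uᶜ, (k i + 1)
      = ∑ U with P U, ∑ T ∈ Uᶜ.powerset, ∏ i ∈ T, k i := sum_congr rfl fun U _ => prod_add_one _
    _ = ∑ T, ∑ U with P U ∧ Disjoint U T, ∏ i ∈ T, k i := sum_comm' fun U T => by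
        simp [subset_compl_iff_disjoint_left, disjoint_comm]
    _ = ∑ T, (∏ i ∈ T, k i) * #{U | P U ∧ Disjoint U T} := by simp [mul_comm]
    _ = _ := by
      refine (sum_subset (subset_univ _) fun T _ hT => ?_).symm
      obtain ⟨i, hiT, hi⟩ := not_subset.1 (mt mem_powerset.2 hT)
      rw [prod_eq_zero hiT (by simpa using hi), zero_mul]

end Finset

namespace Multigraph

variable {V : Type}

section general

variable {E : Type} {G : Multigraph V E} {S : Set E}

abbrev Reachable (G : Multigraph V E) (S : Set E) : V → V → Prop :=
  Relation.ReflTransGen (G.Adj S)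

theorem Adj.symm {x y : V} (h : G.Adj S x y) : G.Adj S y x := by
  obtain ⟨hxy, e, he, hends⟩ := h
  exact ⟨hxy.symm, e, he, hends.trans Sym2.eq_swap⟩

theorem Reachable.symm {x y : V} (h : G.Reachable S x y) : G.Reachable S y x :=
  Relation.ReflTransGen.mono (fun _ _ => Adj.symm) _ _ (Relation.ReflTransGen.swap _ _ h)

theorem Reachable.map {W F : Type} {H : Multigraph W F} {T : Set F} (f : V → W)
    (hf : ∀ e ∈ S, ∃ u v, G.ends e = s(u, v) ∧ H.Reachable T (f u) (f v)) {x y : V}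
    (h : G.Reachable S x y) : H.Reachable T (f x) (f y) := by
  refine Relation.ReflTransGen.lift' f (fun x y ⟨_, e, he, hxy⟩ => ?_) _ _ h
  obtain ⟨u, v, huv, hr⟩ := hf e he
  exact Sym2.rel_of_mk_eq (r := fun a b => H.Reachable T (f a) (f b)) (fun _ _ => Reachable.symm)
    (huv.symm.trans hxy) hr

theorem not_connectedOn_of_invariant (P : V → Prop)
    (hP : ∀ e ∈ S, ∃ u v, G.ends e = s(u, v) ∧ (P u ↔ P v))
    {x y : V} (hx : P x) (hy : ¬ P y) : ¬ G.ConnectedOn S := by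
  have hreach : ∀ z, G.Reachable S x z → P z := fun z hz => by
    induction hz with
    | refl => exact hx
    | tail _ hyz ih =>
      obtain ⟨_, e, he, hends⟩ := hyz
      obtain ⟨u, v, huv, hP'⟩ := hP e he
      exact (Sym2.rel_of_mk_eq (r := fun a b => P a ↔ P b) (fun _ _ => Iff.symm)
        (huv.symm.trans hends) hP').1 ih
  exact fun h => hy (hreach y (h x y))

section deleteEdges

variable {R : Set E}

theorem adj_deleteEdges (S : Set {f : E // f ∉ R}) :
    (G.deleteEdges R).Adj S = G.Adj (Subtype.val '' S) := by
  ext x y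
  simp [Adj, deleteEdges]

theorem connectedOn_deleteEdges_iff {S : Set {f : E // f ∉ R}} :
    (G.deleteEdges R).ConnectedOn S ↔ G.ConnectedOn (Subtype.val '' S) := by
  rw [ConnectedOn, ConnectedOn, adj_deleteEdges]

theorem isSpanningTree_deleteEdges_iff {U : Finset {f : E // f ∉ R}} :
    (G.deleteEdges R).IsSpanningTree U ↔
      G.IsSpanningTree (U.map (Function.Embedding.subtype _)) := by
  simp only [IsSpanningTree, Finset.coe_map, Finset.forall_mem_map,
    Function.Embedding.coe_subtype, connectedOn_deleteEdges_iff,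
    Set.image_sdiff Subtype.val_injective, Set.image_singleton]

theorem complexity_deleteEdges :
    (G.deleteEdges R).complexity = {U : Finset E | G.IsSpanningTree U ∧ Disjoint ↑U R}.ncard := by
  classical
  rw [complexity, ← Set.ncard_image_of_injective _ (Finset.map_injective (.subtype _))]
  congr 1
  ext U
  constructor
  · rintro ⟨U', hU', rfl⟩
    exact ⟨isSpanningTree_deleteEdges_iff.1 hU', Set.disjoint_left.2 (by simp +contextual)⟩
  · rintro ⟨hU, hUR⟩
    have hmap : (U.subtype (· ∉ R)).map (.subtype _) = U :=
      Finset.subtype_map_of_mem fun _ hx => Set.disjoint_left.1 hUR hx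
    exact ⟨U.subtype (· ∉ R), isSpanningTree_deleteEdges_iff.2 (by rwa [hmap]), hmap⟩

end deleteEdges

end general

open Finset

variable {δ : ℕ} {a b : Fin δ → V} {k : Fin δ → ℕ}

section chains

@[simp] theorem subAllVert_zero (i : Fin δ) : subAllVert a b k i 0 = .inl (a i) := rfl

theorem subAllVert_of_lt {i : Fin δ} {j : ℕ} (h : k i < j) :
    subAllVert a b k i j = .inl (b i) := by
  simp [subAllVert, Nat.ne_zero_of_lt h, Nat.not_le.2 h]

theorem subAllVert_of_le {i : Fin δ} {j : ℕ} (h0 : j ≠ 0) (h : j ≤ k i) :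
    subAllVert a b k i j = .inr ⟨i, ⟨j - 1, by omega⟩⟩ := by
  simp [subAllVert, h0, h]

theorem subAllVert_succ {i : Fin δ} (m : Fin (k i)) :
    subAllVert a b k i (m + 1) = .inr ⟨i, m⟩ := by
  simp [subAllVert_of_le (Nat.succ_ne_zero m) m.is_lt]

theorem subAllVert_ne_succ {i : Fin δ} (hab : a i ≠ b i) {j : ℕ} (hj : j ≤ k i) :
    subAllVert a b k i j ≠ subAllVert a b k i (j + 1) := by
  rcases Nat.eq_zero_or_pos j with rfl | hj0
  · rcases Nat.eq_zero_or_pos (k i) with hk | hk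
    · simpa [subAllVert_of_lt (show k i < 0 + 1 by omega)] using hab
    · simp [subAllVert_of_le (show 0 + 1 ≠ 0 by omega) (show 0 + 1 ≤ k i by omega)]
  · rcases hj.lt_or_eq with hjk | rfl
    · simp [subAllVert_of_le (show j ≠ 0 by omega) hj,
        subAllVert_of_le (show j + 1 ≠ 0 by omega) hjk]
      omega
    · rw [subAllVert_of_le (by omega) hj, subAllVert_of_lt (Nat.lt_succ_self _)]
      simp

variable {G : Multigraph V (Fin δ)} {S : Set (Σ i : Fin δ, Fin (k i + 1))}

theorem reachable_subAllVert {i : Fin δ} (hab : a i ≠ b i) {p q : ℕ} (hpq : p ≤ q)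
    (hq : q ≤ k i + 1) (hS : ∀ t : Fin (k i + 1), p ≤ t → (t : ℕ) < q → ⟨i, t⟩ ∈ S) :
    (G.subdivideAll a b k).Reachable S (subAllVert a b k i p) (subAllVert a b k i q) := by
  induction q, hpq using Nat.le_induction with
  | base => exact .refl
  | succ q hpq ih =>
    refine (ih (by omega) fun t ht htq => hS t ht (by omega)).tail ?_
    exact ⟨subAllVert_ne_succ hab (by omega), ⟨i, ⟨q, by omega⟩⟩, hS _ hpq (by simp), rfl⟩

/-- Collapse every chain onto its original edge, cutting chain `i` at its edge `c i`. -/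
def collapse (a b : Fin δ → V) (c : ∀ i, Fin (k i + 1)) : V ⊕ (Σ i : Fin δ, Fin (k i)) → V
  | .inl x => x
  | .inr ⟨i, m⟩ => if (m : ℕ) < c i then a i else b i

theorem collapse_subAllVert (c : ∀ i, Fin (k i + 1)) {i : Fin δ} {j : ℕ} (hj : j ≤ k i + 1) :
    collapse a b c (subAllVert a b k i j) = if j ≤ c i then a i else b i := by
  rcases Nat.eq_zero_or_pos j with rfl | hj0
  · simp [collapse]
  rcases Nat.lt_or_ge (k i) j with hjk | hjk
  · have := (c i).is_le
    simp only [subAllVert_of_lt hjk, collapse]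
    rw [if_neg (by omega)]
  · simp only [subAllVert_of_le hj0.ne' hjk, collapse]
    exact if_congr (by omega) rfl rfl

theorem Reachable.collapse (hab : ∀ i, G.ends i = s(a i, b i) ∧ a i ≠ b i)
    {c : ∀ i, Fin (k i + 1)} {T : Set (Fin δ)} (hc : ∀ i, ⟨i, c i⟩ ∈ S → i ∈ T)
    {x y : V ⊕ (Σ i : Fin δ, Fin (k i))} (h : (G.subdivideAll a b k).Reachable S x y) :
    G.Reachable T (collapse a b c x) (collapse a b c y) := by
  refine h.map _ fun ⟨i, t⟩ ht => ⟨subAllVert a b k i t, subAllVert a b k i (t + 1), rfl, ?_⟩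
  rw [collapse_subAllVert c t.is_lt.le, collapse_subAllVert c (by omega)]
  rcases lt_trichotomy t (c i) with hlt | rfl | hgt
  · rw [if_pos (Fin.le_iff_val_le_val.1 hlt.le), if_pos (Nat.succ_le_of_lt hlt)]
  · rw [if_pos le_rfl, if_neg (by omega)]
    exact .single ⟨(hab i).2, i, hc i ht, (hab i).1⟩
  · rw [if_neg (by omega), if_neg (by omega)]

theorem not_connectedOn_of_two_gaps {i : Fin δ} {t₁ t₂ : Fin (k i + 1)} (hlt : t₁ < t₂)
    (h₁ : ⟨i, t₁⟩ ∉ S) (h₂ : ⟨i, t₂⟩ ∉ S) : ¬ (G.subdivideAll a b k).ConnectedOn S := by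
  let P : V ⊕ (Σ i : Fin δ, Fin (k i)) → Prop
    | .inl _ => False
    | .inr ⟨i', m⟩ => i' = i ∧ (t₁ : ℕ) ≤ m ∧ (m : ℕ) < t₂
  have hP : ∀ i' j, j ≤ k i' + 1 →
      (P (subAllVert a b k i' j) ↔ i' = i ∧ (t₁ : ℕ) < j ∧ j ≤ t₂) := by
    intro i' j hj
    rcases Nat.eq_zero_or_pos j with rfl | hj0
    · simp [P]
    rcases Nat.lt_or_ge (k i') j with hjk | hjk
    · simp only [subAllVert_of_lt hjk, P, false_iff]
      rintro ⟨rfl, -, h⟩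
      have := t₂.is_le
      omega
    · simp only [subAllVert_of_le hj0.ne' hjk, P]
      exact and_congr_right fun _ => by omega
  refine not_connectedOn_of_invariant P
    (fun ⟨i', t⟩ ht => ⟨subAllVert a b k i' t, subAllVert a b k i' (t + 1), rfl, ?_⟩)
    ((hP i t₂ t₂.is_lt.le).2 ⟨rfl, hlt, le_rfl⟩) (y := .inl (a i)) id
  rw [hP _ _ t.is_lt.le, hP _ _ (by omega)]
  by_cases hi : i' = i
  · subst hi
    have h1 : (t : ℕ) ≠ t₁ := fun h => h₁ (Fin.ext h ▸ ht)
    have h2 : (t : ℕ) ≠ t₂ := fun h => h₂ (Fin.ext h ▸ ht)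
    exact and_congr_right fun _ => by omega
  · simp [hi]

theorem eq_of_notMem_of_connectedOn (h : (G.subdivideAll a b k).ConnectedOn S) {i : Fin δ}
    {t₁ t₂ : Fin (k i + 1)} (h₁ : ⟨i, t₁⟩ ∉ S) (h₂ : ⟨i, t₂⟩ ∉ S) : t₁ = t₂ := by
  by_contra hne
  rcases lt_or_gt_of_ne hne with hlt | hlt
  exacts [not_connectedOn_of_two_gaps hlt h₁ h₂ h, not_connectedOn_of_two_gaps hlt h₂ h₁ h]

end chains

section gaps

variable {G : Multigraph V (Fin δ)} {gap : ∀ i, Option (Fin (k i + 1))}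

/-- The edges of the subdivision except, on each chain `i`, the edge `gap i` (if `gap i ≠ none`). -/
def avoidGaps (k : Fin δ → ℕ) (gap : ∀ i, Option (Fin (k i + 1))) :
    Finset (Σ i : Fin δ, Fin (k i + 1)) :=
  {e | gap e.1 ≠ some e.2}

def intact (gap : ∀ i, Option (Fin (k i + 1))) : Finset (Fin δ) := {i | gap i = none}

@[simp] theorem mem_avoidGaps {e : Σ i : Fin δ, Fin (k i + 1)} :
    e ∈ avoidGaps k gap ↔ gap e.1 ≠ some e.2 := by
  simp [avoidGaps]

@[simp] theorem mem_intact {i : Fin δ} : i ∈ intact gap ↔ gap i = none := by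
  simp [intact]

theorem avoidGaps_injective : Function.Injective (avoidGaps k) := by
  intro gap₁ gap₂ h
  funext i
  refine Option.ext fun t => ?_
  simpa [not_iff_not] using congrArg (⟨i, t⟩ ∈ ·) h

theorem coe_avoidGaps_sdiff_singleton {i : Fin δ} (hi : gap i = none) (t : Fin (k i + 1)) :
    (↑(avoidGaps k gap) : Set (Σ i : Fin δ, Fin (k i + 1))) \ {⟨i, t⟩} =
      ↑(avoidGaps k (Function.update gap i (some t))) := by
  ext ⟨i', t'⟩
  by_cases hii : i' = i
  · subst hii
    simp [hi, eq_comm]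
  · simp [hii]

theorem coe_intact_update (i : Fin δ) (t : Fin (k i + 1)) :
    (↑(intact (Function.update gap i (some t))) : Set (Fin δ)) = ↑(intact gap) \ {i} := by
  ext i'
  by_cases hii : i' = i
  · subst hii
    simp
  · simp [hii]

theorem connectedOn_avoidGaps (hab : ∀ i, G.ends i = s(a i, b i) ∧ a i ≠ b i)
    (h : G.ConnectedOn ↑(intact gap)) :
    (G.subdivideAll a b k).ConnectedOn ↑(avoidGaps k gap) := by
  have chain : ∀ i p q, p ≤ q → q ≤ k i + 1 →
      (∀ t : Fin (k i + 1), p ≤ t → (t : ℕ) < q → gap i ≠ some t) →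
      (G.subdivideAll a b k).Reachable ↑(avoidGaps k gap)
        (subAllVert a b k i p) (subAllVert a b k i q) :=
    fun i p q hpq hq hgap => reachable_subAllVert (hab i).2 hpq hq fun t hp hq =>
      mem_avoidGaps.2 (hgap t hp hq)
  have reach_inl : ∀ x y : V,
      (G.subdivideAll a b k).Reachable ↑(avoidGaps k gap) (.inl x) (.inl y) := fun x y =>
    Reachable.map Sum.inl (fun i hi => ⟨a i, b i, (hab i).1, by
      simpa [subAllVert_of_lt (Nat.lt_succ_self (k i))] using
        chain i 0 (k i + 1) (Nat.zero_le _) le_rfl fun t _ _ => by simp_all⟩) (h x y)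
  have inl_reach : ∀ w, ∃ x : V,
      (G.subdivideAll a b k).Reachable ↑(avoidGaps k gap) (.inl x) w := by
    rintro (x | ⟨i, m⟩)
    · exact ⟨x, .refl⟩
    rw [← subAllVert_succ (a := a) (b := b)]
    by_cases hbefore : ∃ t : Fin (k i + 1), gap i = some t ∧ (t : ℕ) ≤ m
    · -- the gap precedes the vertex, so walk on to `b i`
      obtain ⟨t₀, ht₀, ht₀m⟩ := hbefore
      refine ⟨b i, ?_⟩
      have := chain i (m + 1) (k i + 1) (by omega) le_rfl fun t ht _ hgt => by
        rw [ht₀, Option.some_inj] at hgt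
        omega
      rw [subAllVert_of_lt (Nat.lt_succ_self (k i))] at this
      exact this.symm
    · refine ⟨a i, chain i 0 (m + 1) (Nat.zero_le _) (by omega) fun t _ htm hgt => ?_⟩
      exact hbefore ⟨t, hgt, by omega⟩
  intro w w'
  obtain ⟨x, hx⟩ := inl_reach w
  obtain ⟨x', hx'⟩ := inl_reach w'
  exact hx.symm.trans ((reach_inl x x').trans hx')

theorem connectedOn_avoidGaps_iff (hab : ∀ i, G.ends i = s(a i, b i) ∧ a i ≠ b i) :
    (G.subdivideAll a b k).ConnectedOn ↑(avoidGaps k gap) ↔ G.ConnectedOn ↑(intact gap) := by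
  refine ⟨fun h x y => ?_, connectedOn_avoidGaps hab⟩
  -- cut each chain at its gap; intact chains are cut at their last edge
  refine Reachable.collapse hab (c := fun i => (gap i).getD (Fin.last _)) (fun i hi => ?_)
    (h (.inl x) (.inl y))
  cases hg : gap i <;> simp_all

theorem exists_eq_avoidGaps {S : Finset (Σ i : Fin δ, Fin (k i + 1))}
    (h : (G.subdivideAll a b k).ConnectedOn ↑S) : ∃ gap, S = avoidGaps k gap := by
  have hchain : ∀ i, ∃ g : Option (Fin (k i + 1)), ∀ t, ⟨i, t⟩ ∈ S ↔ g ≠ some t := by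
    intro i
    by_cases hall : ∀ t : Fin (k i + 1), ⟨i, t⟩ ∈ S
    · exact ⟨none, fun t => by simp [hall t]⟩
    obtain ⟨t₀, ht₀⟩ := not_forall.1 hall
    refine ⟨some t₀, fun t => ⟨fun ht heq => ht₀ (Option.some_inj.1 heq ▸ ht), fun hne => ?_⟩⟩
    by_contra ht
    exact hne (congrArg some (eq_of_notMem_of_connectedOn h ht₀ ht))
  choose gap hgap using hchain
  exact ⟨gap, Finset.ext fun ⟨i, t⟩ => by simp [hgap]⟩

theorem isSpanningTree_avoidGaps_iff (hab : ∀ i, G.ends i = s(a i, b i) ∧ a i ≠ b i) :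
    (G.subdivideAll a b k).IsSpanningTree (avoidGaps k gap) ↔ G.IsSpanningTree (intact gap) := by
  refine and_congr (connectedOn_avoidGaps_iff hab)
    ⟨fun hmin i hi hcon => ?_, fun hmin ⟨i, t⟩ ht hcon => ?_⟩
  · have hi' : gap i = none := mem_intact.1 hi
    refine hmin ⟨i, 0⟩ (by simp [hi']) ?_
    rwa [coe_avoidGaps_sdiff_singleton hi', connectedOn_avoidGaps_iff hab, coe_intact_update]
  · cases hg : gap i with
    | none =>
      refine hmin i (mem_intact.2 hg) ?_
      rwa [← coe_intact_update i t, ← connectedOn_avoidGaps_iff hab,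
        ← coe_avoidGaps_sdiff_singleton hg]
    | some t' =>
      -- deleting `⟨i, t⟩` leaves the two gaps `t` and `t'` on chain `i`
      have htt' : t' = t := eq_of_notMem_of_connectedOn hcon (by simp [hg]) (by simp)
      exact mem_avoidGaps.1 ht (hg.trans (congrArg some htt'))

open Classical in
theorem complexity_subdivideAll_eq_card (hab : ∀ i, G.ends i = s(a i, b i) ∧ a i ≠ b i) :
    (G.subdivideAll a b k).complexity =
      #{gap : ∀ i, Option (Fin (k i + 1)) | G.IsSpanningTree (intact gap)} := by
  have hset : {S | (G.subdivideAll a b k).IsSpanningTree S} =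
      avoidGaps k '' {gap | G.IsSpanningTree (intact gap)} := by
    ext S
    constructor
    · intro hS
      obtain ⟨gap, rfl⟩ := exists_eq_avoidGaps hS.1
      exact ⟨gap, (isSpanningTree_avoidGaps_iff hab).1 hS, rfl⟩
    · rintro ⟨gap, hgap, rfl⟩
      exact (isSpanningTree_avoidGaps_iff hab).2 hgap
  rw [complexity, hset, Set.ncard_image_of_injective _ avoidGaps_injective,
    ← Set.ncard_coe_finset, Finset.coe_filter_univ]

open Classical in
theorem complexity_subdivideAll_eq_sum (hab : ∀ i, G.ends i = s(a i, b i) ∧ a i ≠ b i) :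
    (G.subdivideAll a b k).complexity = ∑ U with G.IsSpanningTree U, ∏ i ∈ Uᶜ, (k i + 1) := by
  rw [complexity_subdivideAll_eq_card hab]
  exact (card_filter_pi_option (β := fun i => Fin (k i + 1)) (G.IsSpanningTree ·)).trans (by simp)

end gaps

end Multigraph

open Multigraph in
theorem complexity_subdivideAll_general {V : Type} {δ : ℕ}
    (G : Multigraph V (Fin δ))
    (a b : Fin δ → V) (hab : ∀ i, G.ends i = s(a i, b i) ∧ a i ≠ b i)
    (k : Fin δ → ℕ) :
    (G.subdivideAll a b k).complexity =
      ∑ T ∈ (Finset.univ.filter fun i => k i ≠ 0).powerset,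
        (∏ i ∈ T, k i) * (G.deleteEdges (↑T : Set (Fin δ))).complexity := by
  classical
  rw [complexity_subdivideAll_eq_sum hab, Finset.sum_prod_compl_add_one]
  refine Finset.sum_congr rfl fun T _ => ?_
  rw [complexity_deleteEdges, ← Set.ncard_coe_finset, Finset.coe_filter_univ]
  simp only [Finset.disjoint_coe]

open Multigraph in
/-- General blow-up formula: subdividing the `i`-th edge into a path of `k i + 1` edges,
for every `i`, gives
`c(B_k(Γ)) = ∑_{T ⊆ S} (∏_{i ∈ T} k i) * c(Γ - {l_i : i ∈ T})`,
where `S = {i : k i ≠ 0}`. -/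
theorem complexity_subdivideAll {V : Type} {δ : ℕ} [Fintype V] [DecidableEq V]
    (G : Multigraph V (Fin δ)) (hG : G.Connected)
    (a b : Fin δ → V) (hab : ∀ i, G.ends i = s(a i, b i) ∧ a i ≠ b i)
    (k : Fin δ → ℕ) :
    (G.subdivideAll a b k).complexity =
      ∑ T ∈ (Finset.univ.filter fun i => k i ≠ 0).powerset,
        (∏ i ∈ T, k i) * (G.deleteEdges (↑T : Set (Fin δ))).complexity :=
  complexity_subdivideAll_general G a b hab k
end

section
/- Fix positive integers m_1,…,m_N and let Γ_N(m) be two vertices A, B joined by N internally disjoint paths of lengths m_1,…,m_N. In the degree class group Δ_N(m) of Γ_N(m), let t_k be the class of e_{R¹_k} − e_A, where R¹_k is the first internal vertex of the k-th path (or B if m_k = 1). Let M_k = lcm of {m_1,…,m_N} \ {m_k}. Then the order of t_k in Δ_N(m) equals (Σ_{i=1}^{N} Π_{j≠i} m_j) · M_k / (Π_{j≠k} m_j). -/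
namespace Multigraph

/-- The `j`-th vertex along the `i`-th path of the generalized theta graph:
`Sum.inl 0 = A` for `j = 0`, the internal vertices for `1 ≤ j ≤ m i - 1`,
and `Sum.inl 1 = B` for `j ≥ m i`. -/
def thetaVert (N : ℕ) (m : Fin N → ℕ) (i : Fin N) (j : ℕ) :
    Fin 2 ⊕ Σ i : Fin N, Fin (m i - 1) :=
  if _h0 : j = 0 then Sum.inl 0
  else if h : j ≤ m i - 1 then Sum.inr ⟨i, ⟨j - 1, by omega⟩⟩
  else Sum.inl 1

/-- The generalized theta graph `Γ_N(m)`: two vertices `A = Sum.inl 0` and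
`B = Sum.inl 1` joined by `N` internally disjoint paths, the `i`-th of length `m i`. -/
def theta (N : ℕ) (m : Fin N → ℕ) :
    Multigraph (Fin 2 ⊕ Σ i : Fin N, Fin (m i - 1)) (Σ i : Fin N, Fin (m i)) :=
  ⟨fun e => s(thetaVert N m e.1 e.2.1, thetaVert N m e.1 (e.2.1 + 1))⟩

end Multigraph

/-!
A vector lies in the Laplacian lattice iff it is `L z` for an integer potential `z`, and `(L z)(v)`
is the sum of `z u - z v` over the edges `vu`. If `L z = n t_k`, then `z` is affine along every
path, except that its slope jumps by `n` at `R¹_k` on path `k`. With `D = z B - z A` and `δ_i` the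
first step of `z` on path `i`, this gives `D = m_i δ_i` for `i ≠ k`, `D = m_k δ_k + (m_k - 1) n`,
and, from the equation at `A`, `∑ δ_i = -n`. So `M_k ∣ D`, say `D = M_k w`, and eliminating the
`δ_i` gives `n = -d w` with `d = m_k ∑_{i ≠ k} M_k / m_i + M_k`. Conversely the piecewise affine
potential with `D = M_k` realises `-d t_k`, so the order is `d`; clearing denominators with
`(∏_{j ≠ i} m_j) M_k = m_k (M_k / m_i) ∏_{j ≠ k} m_j` identifies `d` with the stated quotient.
-/

theorem eq_of_second_diff_eq_ite {f : ℕ → ℤ} {L : ℕ} {c : ℤ}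
    (h : ∀ r, r + 2 ≤ L → f r + f (r + 2) - 2 * f (r + 1) = if r = 0 then c else 0) :
    ∀ j, 1 ≤ j → j ≤ L → f j = f 0 + j * (f 1 - f 0) + (j - 1) * c
  | 1, _, _ => by ring
  | 2, _, hL => by
    have := h 0 hL
    push_cast
    simp only [if_pos] at this
    linarith
  | j + 3, _, hL => by
    have h₁ := eq_of_second_diff_eq_ite h (j + 1) (by omega) (by omega)
    have h₂ := eq_of_second_diff_eq_ite h (j + 2) (by omega) (by omega)
    have h₃ := h (j + 1) (by omega)
    simp only [Nat.add_one_ne_zero, if_false] at h₃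
    push_cast at h₁ h₂ ⊢
    linear_combination h₃ + 2 * h₂ - h₁

theorem Fintype.eq_of_sum_eq_of_forall_ne {α M : Type*} [Fintype α] [DecidableEq α] [AddCommGroup M]
    {f g : α → M} (b : α) (hsum : ∑ a, f a = ∑ a, g a) (h : ∀ a, a ≠ b → f a = g a) : f = g := by
  funext a
  by_cases ha : a = b
  · subst ha
    rw [← Finset.add_sum_erase _ _ (Finset.mem_univ a),
      ← Finset.add_sum_erase _ _ (Finset.mem_univ a),
      Finset.sum_congr rfl fun c hc => h c (Finset.ne_of_mem_erase hc)] at hsum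
    exact add_right_cancel hsum
  · exact h a ha

section Arithmetic

variable {ι : Type*} [Fintype ι] [DecidableEq ι]

def thetaOrder (m : ι → ℕ) (k : ι) : ℕ :=
  m k * ∑ i ∈ Finset.univ.erase k, (Finset.univ.erase k).lcm m / m i + (Finset.univ.erase k).lcm m

theorem prod_erase_mul_lcm_erase {m : ι → ℕ} {i k : ι} (hik : i ≠ k) (hi : 0 < m i) :
    (∏ j ∈ Finset.univ.erase i, m j) * (Finset.univ.erase k).lcm m =
      m k * ((Finset.univ.erase k).lcm m / m i) * ∏ j ∈ Finset.univ.erase k, m j := by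
  have hdvd : m i ∣ (Finset.univ.erase k).lcm m :=
    Finset.dvd_lcm (Finset.mem_erase.mpr ⟨hik, Finset.mem_univ i⟩)
  refine Nat.eq_of_mul_eq_mul_left hi ?_
  calc m i * ((∏ j ∈ Finset.univ.erase i, m j) * (Finset.univ.erase k).lcm m)
      = (∏ j, m j) * (Finset.univ.erase k).lcm m := by
        rw [← mul_assoc, Finset.mul_prod_erase _ _ (Finset.mem_univ i)]
    _ = (m k * ∏ j ∈ Finset.univ.erase k, m j) * (m i * ((Finset.univ.erase k).lcm m / m i)) := by
        rw [Finset.mul_prod_erase _ _ (Finset.mem_univ k), Nat.mul_div_cancel' hdvd]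
    _ = m i * (m k * ((Finset.univ.erase k).lcm m / m i) * ∏ j ∈ Finset.univ.erase k, m j) := by
        ring

theorem sum_prod_erase_mul_lcm_erase {m : ι → ℕ} (hm : ∀ i, 0 < m i) (k : ι) :
    (∑ i, ∏ j ∈ Finset.univ.erase i, m j) * (Finset.univ.erase k).lcm m =
      thetaOrder m k * ∏ j ∈ Finset.univ.erase k, m j := by
  rw [Finset.sum_mul, ← Finset.add_sum_erase _ _ (Finset.mem_univ k),
    Finset.sum_congr rfl fun i hi => prod_erase_mul_lcm_erase (Finset.ne_of_mem_erase hi) (hm i),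
    thetaOrder, ← Finset.sum_mul, ← Finset.mul_sum]
  ring

theorem sum_prod_erase_mul_lcm_erase_div {m : ι → ℕ} (hm : ∀ i, 0 < m i) (k : ι) :
    (∑ i, ∏ j ∈ Finset.univ.erase i, m j) * (Finset.univ.erase k).lcm m /
      ∏ j ∈ Finset.univ.erase k, m j = thetaOrder m k := by
  rw [sum_prod_erase_mul_lcm_erase hm, Nat.mul_div_cancel _ (Finset.prod_pos fun i _ => hm i)]

end Arithmetic

namespace Multigraph

open scoped Matrix

section Laplacian

variable {V E : Type} [Fintype V] [DecidableEq V] (G : Multigraph V E)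

theorem mem_lapLattice_iff {x : V → ℤ} :
    x ∈ G.lapLattice ↔ ∃ z, Matrix.of G.lap *ᵥ z = x := by
  have : G.lapLattice = (LinearMap.range (Matrix.of G.lap).mulVecLin).toAddSubgroup := by
    rw [Matrix.range_mulVecLin, Submodule.span_int_eq_addSubgroupClosure]
    rfl
  rw [this]
  rfl

theorem nsmul_DCGclass_eq_zero_iff (x : zeroSum V) (n : ℕ) :
    n • G.DCGclass x = 0 ↔ ∃ z, Matrix.of G.lap *ᵥ z = (n : ℤ) • (x : V → ℤ) := by
  change ((n • x : zeroSum V) : zeroSum V ⧸ G.lapLattice.addSubgroupOf (zeroSum V)) = 0 ↔ _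
  rw [QuotientAddGroup.eq_zero_iff, AddSubgroup.mem_addSubgroupOf, mem_lapLattice_iff,
    AddSubgroup.coe_nsmul, natCast_zsmul]

theorem lap_mulVec_apply (z : V → ℤ) (v : V) :
    (Matrix.of G.lap *ᵥ z) v = ∑ u, (G.edgeCount v u : ℤ) * (z u - z v) := by
  have hoff : ∀ u ∈ Finset.univ.erase v, G.lap v u * z u = G.edgeCount v u * z u := fun u hu => by
    rw [lap, if_neg (Finset.ne_of_mem_erase hu).symm]
  simp only [Matrix.mulVec, dotProduct, Matrix.of_apply]
  rw [← Finset.add_sum_erase _ _ (Finset.mem_univ v),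
    ← Finset.add_sum_erase _ _ (Finset.mem_univ v), Finset.sum_congr rfl hoff]
  simp only [lap, if_pos, sub_self, mul_zero, zero_add, mul_sub, Finset.sum_sub_distrib,
    ← Finset.sum_mul]
  ring

/-- The Laplacian as `-B Bᵀ` for the incidence matrix `B` of an orientation `src → tgt`. -/
theorem lap_mulVec_apply_eq_sum_incidence [Fintype E] (src tgt : E → V)
    (hends : ∀ e, G.ends e = s(src e, tgt e)) (z : V → ℤ) (v : V) :
    (Matrix.of G.lap *ᵥ z) v = ∑ e, ((if src e = v then 1 else 0) - (if tgt e = v then 1 else 0)) *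
      (z (tgt e) - z (src e)) := by
  classical
  have hcount : ∀ u, (G.edgeCount v u : ℤ) = ∑ e, if G.ends e = s(v, u) then 1 else 0 := by
    intro u
    rw [edgeCount, Set.ncard_eq_toFinset_card', Set.toFinset_ofPred, Finset.sum_boole]
  simp only [lap_mulVec_apply, hcount, Finset.sum_mul, ite_mul, one_mul, zero_mul]
  rw [Finset.sum_comm]
  refine Finset.sum_congr rfl fun e _ => ?_
  rw [hends]
  generalize src e = a
  generalize tgt e = b
  rcases eq_or_ne a v with rfl | ha
  · simp only [Sym2.congr_right, Finset.sum_ite_eq, Finset.mem_univ, if_true]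
    split_ifs with hb <;> simp [hb]
  rcases eq_or_ne b v with rfl | hb
  · simp only [Sym2.eq_swap (a := a), Sym2.congr_right, Finset.sum_ite_eq, Finset.mem_univ,
      if_true, if_neg ha]
    ring
  have hne : ∀ u, s(a, b) ≠ s(v, u) := fun u h => by
    have : v ∈ s(a, b) := h ▸ Sym2.mem_mk_left v u
    rcases Sym2.mem_iff.mp this with h | h
    exacts [ha h.symm, hb h.symm]
  simp [hne, ha, hb]

theorem sum_lap_mulVec [Fintype E] (z : V → ℤ) : ∑ v, (Matrix.of G.lap *ᵥ z) v = 0 := by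
  let src e := (Quot.out (G.ends e)).1
  let tgt e := (Quot.out (G.ends e)).2
  have hends : ∀ e, G.ends e = s(src e, tgt e) := fun e => (Quot.out_eq (G.ends e)).symm
  simp only [G.lap_mulVec_apply_eq_sum_incidence src tgt hends, Finset.sum_comm (γ := V),
    ← Finset.sum_mul, Finset.sum_sub_distrib, Finset.sum_ite_eq, Finset.mem_univ, if_true,
    sub_self, zero_mul, Finset.sum_const_zero]

end Laplacian

section Theta

variable {N : ℕ} {m : Fin N → ℕ}

local notation "Vθ" => Fin 2 ⊕ Σ i : Fin N, Fin (m i - 1)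

theorem thetaVert_zero (i : Fin N) : thetaVert N m i 0 = Sum.inl 0 := rfl

theorem thetaVert_succ_ne_inl_zero (i : Fin N) (j : ℕ) : thetaVert N m i (j + 1) ≠ Sum.inl 0 := by
  unfold thetaVert
  split_ifs <;> simp_all

theorem thetaVert_self {i : Fin N} (hi : 1 ≤ m i) : thetaVert N m i (m i) = Sum.inl 1 := by
  unfold thetaVert
  split_ifs <;> first | rfl | omega

theorem thetaVert_eq_inr_iff {i i' : Fin N} {j : ℕ} {r : Fin (m i' - 1)} :
    thetaVert N m i j = Sum.inr ⟨i', r⟩ ↔ i = i' ∧ j = r + 1 := by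
  unfold thetaVert
  split_ifs with h₀ h₁
  · simp [h₀]
  · simp only [Sum.inr.injEq, Sigma.mk.inj_iff]
    constructor
    · rintro ⟨rfl, h⟩
      have := congrArg Fin.val (eq_of_heq h)
      simp only at this
      omega
    · rintro ⟨rfl, rfl⟩
      exact ⟨rfl, heq_of_eq (Fin.ext rfl)⟩
  · simp only [false_iff, not_and]
    rintro rfl
    omega

theorem thetaVert_succ {i : Fin N} {r : ℕ} (hr : r < m i - 1) :
    thetaVert N m i (r + 1) = Sum.inr ⟨i, ⟨r, hr⟩⟩ :=
  thetaVert_eq_inr_iff.mpr ⟨rfl, rfl⟩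

theorem sumElim_thetaVert {α : Type*} {a b : α} {f : Fin N → ℕ → α} (hA : ∀ i, f i 0 = a)
    (hB : ∀ i, f i (m i) = b) {i : Fin N} {j : ℕ} (hj : j ≤ m i) :
    Sum.elim ![a, b] (fun x => f x.1 (x.2 + 1)) (thetaVert N m i j) = f i j := by
  unfold thetaVert
  split_ifs with h₀ h₁
  · simp [h₀, hA]
  · simp only [Sum.elim_inr]
    congr 1
    omega
  · simp only [Sum.elim_inl, Matrix.cons_val_one, Matrix.cons_val_zero]
    rw [show j = m i by omega, hB]

theorem theta_lap_mulVec_apply (z : Vθ → ℤ) (v : Vθ) :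
    (Matrix.of (theta N m).lap *ᵥ z) v = ∑ i, ∑ j ∈ Finset.range (m i),
      ((if thetaVert N m i j = v then 1 else 0) - (if thetaVert N m i (j + 1) = v then 1 else 0)) *
        (z (thetaVert N m i (j + 1)) - z (thetaVert N m i j)) := by
  rw [lap_mulVec_apply_eq_sum_incidence _ (fun e => thetaVert N m e.1 e.2)
    (fun e => thetaVert N m e.1 (e.2 + 1)) fun _ => rfl, Fintype.sum_sigma]
  exact Finset.sum_congr rfl fun i _ => Fin.sum_univ_eq_sum_range (fun j =>
    ((if thetaVert N m i j = v then (1 : ℤ) else 0) -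
      if thetaVert N m i (j + 1) = v then 1 else 0) *
      (z (thetaVert N m i (j + 1)) - z (thetaVert N m i j))) (m i)

theorem theta_lap_mulVec_apply_inl_zero (hm : ∀ i, 1 ≤ m i) (z : Vθ → ℤ) :
    (Matrix.of (theta N m).lap *ᵥ z) (Sum.inl 0) =
      ∑ i, (z (thetaVert N m i 1) - z (Sum.inl 0)) := by
  rw [theta_lap_mulVec_apply]
  refine Finset.sum_congr rfl fun i _ => ?_
  rw [Finset.sum_eq_single_of_mem 0 (Finset.mem_range.mpr (hm i))]
  · simp [thetaVert_zero, thetaVert_succ_ne_inl_zero]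
  · rintro (_ | j) _ hj
    · exact absurd rfl hj
    · simp [thetaVert_succ_ne_inl_zero]

theorem theta_lap_mulVec_apply_inr (z : Vθ → ℤ) (i : Fin N) (r : Fin (m i - 1)) :
    (Matrix.of (theta N m).lap *ᵥ z) (Sum.inr ⟨i, r⟩) =
      z (thetaVert N m i r) + z (thetaVert N m i (r + 2)) - 2 * z (Sum.inr ⟨i, r⟩) := by
  have hr := r.isLt
  rw [theta_lap_mulVec_apply, Finset.sum_eq_single i]
  · simp only [thetaVert_eq_inr_iff, true_and, add_left_inj, sub_mul, ite_mul, one_mul, zero_mul,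
      Finset.sum_sub_distrib, Finset.sum_ite_eq', Finset.mem_range]
    rw [if_pos (by omega), if_pos (by omega), ← thetaVert_succ r.isLt]
    ring
  · intro i' _ hi'
    simp [thetaVert_eq_inr_iff, hi']
  · simp

theorem eDiff_thetaVert_one_apply_inl_zero (k : Fin N) :
    (eDiff Vθ (thetaVert N m k 1) (Sum.inl 0) : Vθ → ℤ) (Sum.inl 0) = -1 := by
  simp [eDiff, (thetaVert_succ_ne_inl_zero k 0).symm]

theorem eDiff_thetaVert_one_apply_inr (k i : Fin N) (r : Fin (m i - 1)) :
    (eDiff Vθ (thetaVert N m k 1) (Sum.inl 0) : Vθ → ℤ) (Sum.inr ⟨i, r⟩) =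
      if i = k ∧ (r : ℕ) = 0 then 1 else 0 := by
  simp [eDiff, eq_comm (a := Sum.inr _), thetaVert_eq_inr_iff, eq_comm (a := k)]

theorem thetaOrder_dvd_of_lap_mulVec_eq (hm : ∀ i, 1 ≤ m i) (k : Fin N) {n : ℤ} {z : Vθ → ℤ}
    (hz : Matrix.of (theta N m).lap *ᵥ z =
      n • (eDiff Vθ (thetaVert N m k 1) (Sum.inl 0) : Vθ → ℤ)) :
    (thetaOrder m k : ℤ) ∣ n := by
  set M := (Finset.univ.erase k).lcm m with hM
  set D := z (Sum.inl 1) - z (Sum.inl 0)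
  set δ : Fin N → ℤ := fun i => z (thetaVert N m i 1) - z (Sum.inl 0)
  have hA : ∑ i, δ i = -n := by
    have := congrFun hz (Sum.inl 0)
    rwa [theta_lap_mulVec_apply_inl_zero hm, Pi.smul_apply, eDiff_thetaVert_one_apply_inl_zero,
      smul_eq_mul, mul_neg_one] at this
  have hpath : ∀ i, D = m i * δ i + (m i - 1) * (if i = k then n else 0) := by
    intro i
    have h := eq_of_second_diff_eq_ite (f := fun j => z (thetaVert N m i j)) (L := m i)
      (c := if i = k then n else 0) ?_ (m i) (hm i) le_rfl
    · simp only [thetaVert_self (hm i), thetaVert_zero] at h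
      simp only [D, δ, h]
      ring
    · intro r hr
      have := congrFun hz (Sum.inr ⟨i, ⟨r, by omega⟩⟩)
      rw [theta_lap_mulVec_apply_inr, Pi.smul_apply, eDiff_thetaVert_one_apply_inr,
        ← thetaVert_succ] at this
      rw [this]
      by_cases hi : i = k <;> by_cases hr : r = 0 <;> simp [hi, hr]
  obtain ⟨w, hw⟩ : (M : ℤ) ∣ D := by
    refine Int.natCast_dvd.mpr (Finset.lcm_dvd fun i hi => Int.natCast_dvd.mp ?_)
    exact ⟨δ i, by simpa [Finset.ne_of_mem_erase hi] using hpath i⟩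
  have hδ : ∀ i ∈ Finset.univ.erase k, δ i = ((M / m i : ℕ) : ℤ) * w := by
    intro i hi
    have hmi : (m i : ℤ) ≠ 0 := by have := hm i; positivity
    refine mul_left_cancel₀ hmi ?_
    rw [← mul_assoc, ← Nat.cast_mul, Nat.mul_div_cancel' (Finset.dvd_lcm hi), ← hw]
    simpa [Finset.ne_of_mem_erase hi] using (hpath i).symm
  have hδk : δ k = -n - (∑ i ∈ Finset.univ.erase k, ((M / m i : ℕ) : ℤ)) * w := by
    rw [← Finset.add_sum_erase _ _ (Finset.mem_univ k), Finset.sum_congr rfl hδ,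
      ← Finset.sum_mul] at hA
    linarith
  refine ⟨-w, ?_⟩
  have hk := hpath k
  simp only [if_pos] at hk
  simp only [thetaOrder, ← hM, Nat.cast_add, Nat.cast_mul, Nat.cast_sum]
  linear_combination hk - hw + (m k : ℤ) * hδk

end Theta

section ThetaPotential

variable (N : ℕ) (m : Fin N → ℕ) (k : Fin N)

local notation "Vθ" => Fin 2 ⊕ Σ i : Fin N, Fin (m i - 1)

def thetaPotentialPath (i : Fin N) (j : ℕ) : ℤ :=
  if i = k then
    if j = 0 then 0
    else thetaOrder m k - j * ∑ i ∈ Finset.univ.erase k, ((Finset.univ.erase k).lcm m / m i : ℕ)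
  else j * ((Finset.univ.erase k).lcm m / m i : ℕ)

def thetaPotential : Vθ → ℤ :=
  Sum.elim ![0, (((Finset.univ.erase k).lcm m : ℕ) : ℤ)] fun x =>
    thetaPotentialPath N m k x.1 (x.2 + 1)

variable {N m}

theorem thetaPotential_thetaVert (hm : ∀ i, 1 ≤ m i) {i : Fin N} {j : ℕ} (hj : j ≤ m i) :
    thetaPotential N m k (thetaVert N m i j) = thetaPotentialPath N m k i j := by
  refine sumElim_thetaVert (fun i => by simp [thetaPotentialPath]) (fun i => ?_) hj
  unfold thetaPotentialPath
  split_ifs with hik h0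
  · exact absurd h0 (by have := hm i; omega)
  · subst hik
    simp only [thetaOrder, Nat.cast_add, Nat.cast_mul, Nat.cast_sum]
    ring
  · rw [← Nat.cast_mul, Nat.mul_div_cancel'
      (Finset.dvd_lcm (Finset.mem_erase.mpr ⟨hik, Finset.mem_univ i⟩))]

theorem lap_mulVec_thetaPotential (hm : ∀ i, 1 ≤ m i) :
    Matrix.of (theta N m).lap *ᵥ thetaPotential N m k =
      -((thetaOrder m k : ℤ) • (eDiff Vθ (thetaVert N m k 1) (Sum.inl 0) : Vθ → ℤ)) := by
  -- Both sides sum to zero, so the equation at `B` follows from the others.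
  refine Fintype.eq_of_sum_eq_of_forall_ne (Sum.inl 1) ?_ ?_
  · have ht : ∑ v, (eDiff Vθ (thetaVert N m k 1) (Sum.inl 0) : Vθ → ℤ) v = 0 :=
      (eDiff Vθ (thetaVert N m k 1) (Sum.inl 0)).2
    simp only [sum_lap_mulVec, Pi.neg_apply, Pi.smul_apply, Finset.sum_neg_distrib,
      ← Finset.smul_sum, ht, smul_zero, neg_zero]
  rintro (a | ⟨i, r⟩) hv
  · match a, hv with
    | 0, _ =>
      rw [theta_lap_mulVec_apply_inl_zero hm, Pi.neg_apply, Pi.smul_apply,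
        eDiff_thetaVert_one_apply_inl_zero]
      have hoff : ∀ i ∈ Finset.univ.erase k, thetaPotentialPath N m k i 1 - thetaPotential N m k
          (Sum.inl 0) = (((Finset.univ.erase k).lcm m / m i : ℕ) : ℤ) := fun i hi => by
        simp [thetaPotentialPath, thetaPotential, Finset.ne_of_mem_erase hi]
      simp only [thetaPotential_thetaVert k hm (hm _)]
      rw [← Finset.add_sum_erase _ _ (Finset.mem_univ k), Finset.sum_congr rfl hoff]
      simp [thetaPotentialPath, thetaPotential]
    | 1, hv => exact absurd rfl hv
  · have hr := r.isLt
    rw [theta_lap_mulVec_apply_inr, Pi.neg_apply, Pi.smul_apply, eDiff_thetaVert_one_apply_inr,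
      ← thetaVert_succ hr, thetaPotential_thetaVert k hm (by omega),
      thetaPotential_thetaVert k hm (by omega), thetaPotential_thetaVert k hm (by omega)]
    unfold thetaPotentialPath
    by_cases hik : i = k <;> by_cases hr0 : (r : ℕ) = 0 <;> simp [hik, hr0] <;> ring

end ThetaPotential

end Multigraph

open Multigraph in
/-- In the degree class group of `Γ_N(m)`, the order of the class `t k` of
`e_{R¹_k} - e_A` is `(∑_i ∏_{j ≠ i} m j) * lcm{m j : j ≠ k} / ∏_{j ≠ k} m j`. -/
theorem order_tk_theta (N : ℕ) (m : Fin N → ℕ) (hm : ∀ i, 1 ≤ m i) (k : Fin N) :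
    addOrderOf
        ((theta N m).DCGclass (Multigraph.eDiff _ (thetaVert N m k 1) (Sum.inl 0))) =
      (∑ i : Fin N, ∏ j ∈ Finset.univ.erase i, m j) * (Finset.univ.erase k).lcm m /
        ∏ j ∈ Finset.univ.erase k, m j := by
  rw [sum_prod_erase_mul_lcm_erase_div hm]
  refine Nat.dvd_right_iff_eq.mp fun n => ?_
  rw [addOrderOf_dvd_iff_nsmul_eq_zero, nsmul_DCGclass_eq_zero_iff]
  constructor
  · rintro ⟨z, hz⟩
    exact Int.natCast_dvd_natCast.mp (thetaOrder_dvd_of_lap_mulVec_eq hm k hz)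
  · rintro ⟨q, rfl⟩
    refine ⟨-(q : ℤ) • thetaPotential N m k, ?_⟩
    rw [Matrix.mulVec_smul, lap_mulVec_thetaPotential k hm, smul_neg, neg_smul, neg_neg, smul_smul,
      Nat.cast_mul, mul_comm]
end

section
/- Let M be a 2×2 integer matrix with entries m_{ij} such that m_{11} > 0, m_{12} ≥ 0, gcd(m_{21}, gcd(m_{11}, m_{12})) = gcd(m_{11}, m_{12}), and gcd(m_{22}, gcd(m_{11}, m_{12})) = 1. Then the cokernel ℤ²/M(ℤ²) of the endomorphism of ℤ² induced by M is a cyclic group. -/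
/-!
If the image of `M` contains a primitive vector `z`, then `z` extends to a basis `(z, v)` of `ℤ²`
and the class of `v` generates the cokernel. Write the first row of `M` as `g • (a, b)` with
`g = gcd(m₁₁, m₁₂)`. Bezout solutions of `a x + b y = 1` give `(M w)₀ = g` for `w = (x, y)`, and
since units of `ℤ/(a g)` surject onto units of `ℤ/a`, `y` can be chosen coprime to `g`. As
`g ∣ m₂₁`, `(M w)₁ ≡ m₂₂ y (mod g)` is then coprime to `g`, so `M w` is primitive.
-/

open Matrix

namespace Int

theorem exists_isCoprime_modEq {a : ℤ} {n m : ℕ} (hm : m ≠ 0) (hnm : n ∣ m)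
    (ha : IsCoprime a n) : ∃ b : ℤ, IsCoprime b m ∧ b ≡ a [ZMOD n] := by
  have : NeZero m := ⟨hm⟩
  obtain ⟨u, hu⟩ := ZMod.unitsMap_surjective hnm (ZMod.unitOfIsCoprime a ha)
  refine ⟨((u : ZMod m).val : ℤ),
    Nat.isCoprime_iff_coprime.mpr (ZMod.val_coe_unit_coprime u), ?_⟩
  rw [← ZMod.intCast_eq_intCast_iff, ← ZMod.coe_unitOfIsCoprime a ha, ← hu]
  simp [ZMod.unitsMap_val]

theorem exists_bezout_isCoprime_right {a b : ℤ} (m : ℤ) (hab : IsCoprime a b) (ha : a ≠ 0)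
    (hm : m ≠ 0) : ∃ x y : ℤ, a * x + b * y = 1 ∧ IsCoprime y m := by
  obtain ⟨x₀, y₀, hxy₀⟩ := hab
  have hy₀ : IsCoprime y₀ (a.natAbs : ℤ) := by
    rw [natCast_natAbs, IsCoprime.abs_right_iff]
    exact ⟨b, x₀, by linear_combination hxy₀⟩
  obtain ⟨y, hy, hyy₀⟩ := exists_isCoprime_modEq (mul_ne_zero (natAbs_ne_zero.mpr ha)
    (natAbs_ne_zero.mpr hm)) (dvd_mul_right _ _) hy₀
  -- any `y ≡ y₀ (mod a)` still completes a Bezout pair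
  obtain ⟨k, hk⟩ : a ∣ y - y₀ := by
    simpa using hyy₀.symm.dvd
  refine ⟨x₀ - b * k, y, by linear_combination hxy₀ + b * hk, ?_⟩
  rw [Nat.cast_mul, natCast_natAbs, natCast_natAbs] at hy
  exact (IsCoprime.abs_right_iff _ _).mp hy.of_mul_right_right

end Int

theorem isAddCyclic_quotient_of_isCoprime {N : Submodule ℤ (Fin 2 → ℤ)} {z : Fin 2 → ℤ}
    (hz : z ∈ N) (hcop : IsCoprime (z 0) (z 1)) : IsAddCyclic ((Fin 2 → ℤ) ⧸ N) := by
  obtain ⟨A, B, hAB⟩ := hcop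
  refine ⟨N.mkQ ![-B, A], fun q => ?_⟩
  obtain ⟨w, rfl⟩ := N.mkQ_surjective q
  refine ⟨z 0 * w 1 - z 1 * w 0, ?_⟩
  have hw : w = (A * w 0 + B * w 1) • z + (z 0 * w 1 - z 1 * w 0) • ![-B, A] := by
    ext i
    fin_cases i
    · simp only [Fin.zero_eta, Pi.add_apply, Pi.smul_apply, smul_eq_mul, cons_val_zero]
      linear_combination -w 0 * hAB
    · simp only [Fin.mk_one, Pi.add_apply, Pi.smul_apply, smul_eq_mul, cons_val_one,
        cons_val_fin_one]
      linear_combination -w 1 * hAB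
  have hz₀ : N.mkQ ((A * w 0 + B * w 1) • z) = 0 :=
    (Submodule.Quotient.mk_eq_zero N).mpr (N.smul_mem _ hz)
  conv_rhs => rw [hw, map_add, hz₀, zero_add, map_zsmul]

theorem exists_isCoprime_mulVec (M : Matrix (Fin 2) (Fin 2) ℤ) (h00 : M 0 0 ≠ 0)
    (h10 : (Int.gcd (M 0 0) (M 0 1) : ℤ) ∣ M 1 0)
    (h11 : IsCoprime (M 1 1) (Int.gcd (M 0 0) (M 0 1))) :
    ∃ w, IsCoprime ((M *ᵥ w) 0) ((M *ᵥ w) 1) := by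
  set g : ℤ := (Int.gcd (M 0 0) (M 0 1) : ℤ)
  obtain ⟨a, b, hab, ha, hb⟩ := Int.exists_gcd_one (Int.gcd_pos_of_ne_zero_left (M 0 1) h00)
  have ha₀ : a ≠ 0 := by
    rintro rfl
    exact h00 (by simpa using ha)
  obtain ⟨x, y, hxy, hy⟩ := Int.exists_bezout_isCoprime_right g
    (Int.isCoprime_iff_gcd_eq_one.mpr hab) ha₀ (by simp [g, h00])
  obtain ⟨c, hc⟩ := h10
  refine ⟨![x, y], ?_⟩
  have h0 : (M *ᵥ ![x, y]) 0 = g := by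
    simp only [mulVec, dotProduct, Fin.sum_univ_two, cons_val_zero, cons_val_one]
    linear_combination g * hxy + x * ha + y * hb
  have h1 : (M *ᵥ ![x, y]) 1 = M 1 1 * y + g * (c * x) := by
    simp only [mulVec, dotProduct, Fin.sum_univ_two, cons_val_zero, cons_val_one]
    linear_combination x * hc
  rw [h0, h1]
  exact ((h11.mul_left hy).add_mul_left_left _).symm

theorem coker_cyclic_general (M : Matrix (Fin 2) (Fin 2) ℤ)
    (h11 : 0 < M 0 0)
    (h21 : Int.gcd (M 1 0) (Int.gcd (M 0 0) (M 0 1)) = Int.gcd (M 0 0) (M 0 1))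
    (h22 : Int.gcd (M 1 1) (Int.gcd (M 0 0) (M 0 1)) = 1) :
    IsAddCyclic ((Fin 2 → ℤ) ⧸ LinearMap.range (Matrix.toLin' M)) := by
  have hdvd : (Int.gcd (M 0 0) (M 0 1) : ℤ) ∣ M 1 0 := h21 ▸ Int.gcd_dvd_left _ _
  obtain ⟨w, hw⟩ :=
    exists_isCoprime_mulVec M h11.ne' hdvd (Int.isCoprime_iff_gcd_eq_one.mpr h22)
  exact isAddCyclic_quotient_of_isCoprime ⟨w, toLin'_apply M w⟩ hw

/-- If `M` is a 2×2 integer matrix with `m₁₁ > 0`, `m₁₂ ≥ 0`, `gcd(m₁₁, m₁₂) ∣ m₂₁`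
(expressed via gcds) and `gcd(m₂₂, gcd(m₁₁, m₁₂)) = 1`, then the cokernel of the
endomorphism of `ℤ²` induced by `M` is cyclic. -/
theorem coker_cyclic (M : Matrix (Fin 2) (Fin 2) ℤ)
    (h11 : 0 < M 0 0) (h12 : 0 ≤ M 0 1)
    (h21 : Int.gcd (M 1 0) (Int.gcd (M 0 0) (M 0 1)) = Int.gcd (M 0 0) (M 0 1))
    (h22 : Int.gcd (M 1 1) (Int.gcd (M 0 0) (M 0 1)) = 1) :
    IsAddCyclic ((Fin 2 → ℤ) ⧸ LinearMap.range (Matrix.toLin' M)) :=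
  coker_cyclic_general M h11 h21 h22
end
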